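/- arXiv:1808.09962 — 3 statements merged into one kernel-verified Lean document; each statement's English description precedes it below -/
import Mathlib

section
/- Let G be a k-uniform unicyclic hypergraph of size m whose unique cycle has length at least 3 (k ≥ 3). Then σ(G) ≥ (k−1)m[(k−1)m − 1 − k/2], with equality if and only if the diameter of G is at most 2. -/
open Finset

/-- A (finite) hypergraph: a finite vertex set together with a finite family of edges,
each edge being a finite set of vertices. -/
structure FinHypergraph (α : Type) where
  verts : Finset α
  edges : Finset (Finset α)

namespace FinHypergraph

variable {α β : Type}

/-- Every edge is a subset of the vertex set. -/
def Good (G : FinHypergraph α) : Prop := ∀ e ∈ G.edges, e ⊆ G.verts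

/-- `k`-uniform: every edge has cardinality `k`. -/
def Uniform (G : FinHypergraph α) (k : ℕ) : Prop := ∀ e ∈ G.edges, e.card = k

/-- A walk of length `p` from `u` to `v`: an alternating sequence of vertices and edges,
with consecutive vertices distinct and both lying in the connecting edge. -/
inductive Walk (G : FinHypergraph α) : α → α → ℕ → Prop
  | nil (v : α) : Walk G v v 0
  | cons {u w : α} (v : α) {p : ℕ} (e : Finset α) (he : e ∈ G.edges)
      (hu : u ∈ e) (hv : v ∈ e) (hne : u ≠ v) (hw : Walk G v w p) :
      Walk G u w (p + 1)

def Connected (G : FinHypergraph α) : Prop :=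
  ∀ u ∈ G.verts, ∀ v ∈ G.verts, ∃ p, G.Walk u v p

/-- Distance: length of a shortest walk (equivalently, of a shortest path). -/
noncomputable def dist (G : FinHypergraph α) (u v : α) : ℕ := sInf {p | G.Walk u v p}

/-- `σ_G(u) = ∑_{v ∈ V(G)} d_G(u,v)`. -/
noncomputable def transFrom [DecidableEq α] (G : FinHypergraph α) (u : α) : ℕ :=
  ∑ v ∈ G.verts, G.dist u v

/-- The transmission `σ(G)`: the sum of distances over all unordered pairs of
distinct vertices (distances being symmetric, this is half the sum over ordered pairs). -/
noncomputable def trans [DecidableEq α] (G : FinHypergraph α) : ℕ :=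
  (∑ u ∈ G.verts, ∑ v ∈ G.verts, G.dist u v) / 2

/-- `σ_G(A,B) = ∑_{a ∈ A, b ∈ B} d_G(a,b)`. -/
noncomputable def transBetween [DecidableEq α] (G : FinHypergraph α) (A B : Finset α) : ℕ :=
  ∑ a ∈ A, ∑ b ∈ B, G.dist a b

/-- The diameter: the maximum distance between two vertices. -/
noncomputable def diam (G : FinHypergraph α) : ℕ :=
  G.verts.sup fun u => G.verts.sup fun v => G.dist u v

/-- The degree of a vertex: the number of edges containing it. -/
def degree [DecidableEq α] (G : FinHypergraph α) (v : α) : ℕ :=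
  (G.edges.filter fun e => v ∈ e).card

/-- A cycle of length `n+2` in `G`: vertices `v 0, …, v (n+1)` (all distinct) and
distinct edges `e 0, …, e (n+1)` of `G` with `v i, v (i+1) ∈ e i` (indices mod `n+2`). -/
structure Cycle (G : FinHypergraph α) where
  n : ℕ
  v : Fin (n + 2) → α
  e : Fin (n + 2) → Finset α
  he : ∀ i, e i ∈ G.edges
  einj : Function.Injective e
  vinj : Function.Injective v
  mem_fst : ∀ i, v i ∈ e i
  mem_snd : ∀ i, v (i + 1) ∈ e i

/-- The length of a cycle (its number of edges). -/
def Cycle.length {G : FinHypergraph α} (C : G.Cycle) : ℕ := C.n + 2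

/-- The set of edges of a cycle. -/
def Cycle.edgeFinset [DecidableEq α] {G : FinHypergraph α} (C : G.Cycle) : Finset (Finset α) :=
  Finset.univ.image C.e

/-- Unicyclic: connected with exactly one cycle (all cycles have the same edge set). -/
def Unicyclic [DecidableEq α] (G : FinHypergraph α) : Prop :=
  G.Connected ∧ Nonempty G.Cycle ∧ ∀ C C' : G.Cycle, C.edgeFinset = C'.edgeFinset

/-- Isomorphism of hypergraphs. -/
def Isomorphic [DecidableEq β] (G : FinHypergraph α) (H : FinHypergraph β) : Prop :=
  ∃ f : α → β, Set.BijOn f ↑G.verts ↑H.verts ∧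
    ∀ e : Finset α, e ⊆ G.verts → (e ∈ G.edges ↔ e.image f ∈ H.edges)

/-- Rename the vertices of a hypergraph along `f`. -/
def mapHG [DecidableEq β] (f : α → β) (G : FinHypergraph α) : FinHypergraph β :=
  ⟨G.verts.image f, G.edges.image (Finset.image f)⟩

def unionHG [DecidableEq α] (G H : FinHypergraph α) : FinHypergraph α :=
  ⟨G.verts ∪ H.verts, G.edges ∪ H.edges⟩

def unionMany [DecidableEq α] {n : ℕ} (Hs : Fin n → FinHypergraph α) : FinHypergraph α :=
  ⟨Finset.univ.biUnion fun i => (Hs i).verts, Finset.univ.biUnion fun i => (Hs i).edges⟩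

/-- Move the edge `e` from `u` to `x`: replace `e` by `(e \ {u}) ∪ {x}`. -/
def moveEdge [DecidableEq α] (G : FinHypergraph α) (e : Finset α) (u x : α) : FinHypergraph α :=
  ⟨G.verts, insert (insert x (e.erase u)) (G.edges.erase e)⟩

/-- Move each edge of `S` from `u` to `x`. -/
def moveEdges [DecidableEq α] (G : FinHypergraph α) (S : Finset (Finset α)) (u x : α) :
    FinHypergraph α :=
  ⟨G.verts, (G.edges \ S) ∪ S.image fun e => insert x (e.erase u)⟩

/-- Delete a set of edges (keeping all vertices). -/
def deleteEdges [DecidableEq α] (G : FinHypergraph α) (S : Finset (Finset α)) : FinHypergraph α :=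
  ⟨G.verts, G.edges \ S⟩

open Classical in
/-- The vertex set of the component of `G` containing `u`. -/
noncomputable def component (G : FinHypergraph α) (u : α) : Finset α :=
  G.verts.filter fun x => ∃ p, G.Walk u x p

/-- The component of `G` containing `u`, as a hypergraph. -/
noncomputable def componentHG [DecidableEq α] (G : FinHypergraph α) (u : α) : FinHypergraph α :=
  ⟨G.component u, G.edges.filter fun e => e ⊆ G.component u⟩

/-- The `k`-uniform loose cycle with `m` edges `e_0, …, e_{m-1}`,
consecutive edges sharing exactly one vertex. -/
def looseCycle (m k : ℕ) : FinHypergraph ℕ where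
  verts := Finset.range (m * (k - 1))
  edges := (Finset.range m).image fun i =>
    (Finset.range k).image fun j => (i * (k - 1) + j) % (m * (k - 1))

/-- `C^k_2(t,s)`: two `k`-edges sharing exactly the two vertices `0,1`, with a hyperstar of
`t` edges attached at `0` and a hyperstar of `s` edges attached at `1`. -/
def Ck2 (k t s : ℕ) : FinHypergraph ℕ where
  verts := Finset.range ((t + s + 2) * (k - 1))
  edges :=
    {Finset.range k, insert 0 (insert 1 (Finset.Ico k (2 * k - 2)))} ∪
    ((Finset.range t).image fun i =>
      insert 0 (Finset.Ico (2 * k - 2 + i * (k - 1)) (2 * k - 2 + (i + 1) * (k - 1)))) ∪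
    ((Finset.range s).image fun j =>
      insert 1 (Finset.Ico (2 * k - 2 + t * (k - 1) + j * (k - 1))
        (2 * k - 2 + t * (k - 1) + (j + 1) * (k - 1))))

/-- `C̃^k_2(p,q)`: the loose 2-cycle on the two `k`-edges `{0,…,k-1}` and
`{0,1} ∪ {k,…,2k-3}` (sharing exactly `0,1`), with a pendant path of length `p`
attached at the degree-one vertex `2` of the first edge and a pendant path of length `q`
attached at the degree-one vertex `k` of the second edge. -/
def Ctilde (k p q : ℕ) : FinHypergraph ℕ where
  verts := Finset.range ((p + q + 2) * (k - 1))
  edges :=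
    {Finset.range k, insert 0 (insert 1 (Finset.Ico k (2 * k - 2)))} ∪
    ((Finset.range p).image fun i =>
      insert (if i = 0 then 2 else 2 * k - 2 + i * (k - 1) - 1)
        (Finset.Ico (2 * k - 2 + i * (k - 1)) (2 * k - 2 + (i + 1) * (k - 1)))) ∪
    ((Finset.range q).image fun j =>
      insert (if j = 0 then k else 2 * k - 2 + p * (k - 1) + j * (k - 1) - 1)
        (Finset.Ico (2 * k - 2 + p * (k - 1) + j * (k - 1))
          (2 * k - 2 + p * (k - 1) + (j + 1) * (k - 1))))

/-- The triangle with one pendant edge, `C^2_3(1,0,0)`. -/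
def triPendant : FinHypergraph ℕ :=
  ⟨Finset.range 4, {{0, 1}, {1, 2}, {0, 2}, {0, 3}}⟩

/-- `G_{u,v}(p,q)`: attach a loose pendant path of `p` `k`-edges at `u` and a loose pendant
path of `q` `k`-edges at `v`, using fresh vertices (the `Sum.inr` side). -/
def attachTwoPathsAt [DecidableEq α] (k : ℕ) (G : FinHypergraph α) (u v : α) (p q : ℕ) :
    FinHypergraph (α ⊕ ℕ) where
  verts := G.verts.image Sum.inl ∪ (Finset.range ((p + q) * (k - 1))).image Sum.inr
  edges :=
    G.edges.image (Finset.image Sum.inl) ∪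
    ((Finset.range p).image fun i =>
      insert (if i = 0 then Sum.inl u else Sum.inr (i * (k - 1) - 1))
        ((Finset.Ico (i * (k - 1)) ((i + 1) * (k - 1))).image Sum.inr)) ∪
    ((Finset.range q).image fun j =>
      insert (if j = 0 then Sum.inl v else Sum.inr (p * (k - 1) + j * (k - 1) - 1))
        ((Finset.Ico (p * (k - 1) + j * (k - 1)) (p * (k - 1) + (j + 1) * (k - 1))).image
          Sum.inr))

/-- `G_u(p,q)`: attach two loose pendant paths, of lengths `p` and `q`, at `u`. -/
def attachTwoPaths [DecidableEq α] (k : ℕ) (G : FinHypergraph α) (u : α) (p q : ℕ) :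
    FinHypergraph (α ⊕ ℕ) :=
  attachTwoPathsAt k G u u p q

/-- `G_{e,s}(H_1,…,H_{k-1})`: given a pendant edge `e = {w 0, …, w (k-1)}` of `G` at
`w (k-1)`, identify the root `vr i` of `H i` with `w (k-1)` for (0-based) `i < s`, and with
`w i` for `i ≥ s`. -/
def Ges [DecidableEq α] (G : FinHypergraph α) (k : ℕ) (hk : 2 ≤ k) (w : Fin k → α)
    (H : Fin (k - 1) → FinHypergraph α) (vr : Fin (k - 1) → α) (s : ℕ) : FinHypergraph α :=
  unionHG G (unionMany fun i : Fin (k - 1) =>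
    mapHG (Function.update id (vr i)
      (if (i : ℕ) < s then w ⟨k - 1, by omega⟩ else w (Fin.castLE (Nat.sub_le k 1) i))) (H i))

end FinHypergraph

open FinHypergraph

/-!
Summing over the ordered pairs of distinct vertices, `d(u,v) + [d(u,v) = 1] ≥ 2` with equality
iff `d(u,v) ≤ 2`, so `2σ(G) ≥ 2n(n-1) - N₁`, where `N₁` counts the pairs at distance one, with
equality iff `diam G ≤ 2`. A cycle of length at least `3` makes `G` linear, so `N₁ = m k (k-1)`,
and it remains to show `n = m(k-1)`. This is proved by induction on `m`: an edge with at most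
one vertex of degree `≥ 2` is pendant and can be pruned. Otherwise every edge lies on the cycle,
because a longest Berge path through an edge off the cycle closes a cycle at both of its ends,
and the sets `e_i \ {v_i}` of the loose cycle partition the vertex set.
-/

namespace Finset

variable {ι : Type} (s : Finset ι) (f : ι → ℕ)

lemma sum_add_card_filter_eq_one :
    ∑ i ∈ s, f i + #{i ∈ s | f i = 1} = ∑ i ∈ s, (f i + if f i = 1 then 1 else 0) := by
  rw [card_filter, sum_add_distrib]

variable {s f}

lemma two_mul_card_le_sum_add_card_filter_eq_one (hf : ∀ i ∈ s, 1 ≤ f i) :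
    2 * #s ≤ ∑ i ∈ s, f i + #{i ∈ s | f i = 1} := by
  rw [sum_add_card_filter_eq_one, mul_comm, ← smul_eq_mul, ← sum_const]
  refine sum_le_sum fun i hi => ?_
  have := hf i hi
  split_ifs <;> omega

lemma sum_add_card_filter_eq_one_eq_iff (hf : ∀ i ∈ s, 1 ≤ f i) :
    ∑ i ∈ s, f i + #{i ∈ s | f i = 1} = 2 * #s ↔ ∀ i ∈ s, f i ≤ 2 := by
  rw [sum_add_card_filter_eq_one, mul_comm, ← smul_eq_mul, ← sum_const, eq_comm,
    sum_eq_sum_iff_of_le fun i hi => by have := hf i hi; split_ifs <;> omega]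
  refine forall₂_congr fun i hi => ?_
  have := hf i hi
  split_ifs <;> omega

end Finset

namespace Fin

open Fin.NatCast

lemma eq_of_add_natCast_eq {N : ℕ} [NeZero N] (i : Fin N) {s t : ℕ} (hs : s < N) (ht : t < N)
    (h : i + (s : Fin N) = i + t) : s = t := by
  have := congrArg Fin.val (add_left_cancel h)
  rwa [Fin.val_natCast, Fin.val_natCast, Nat.mod_eq_of_lt hs, Nat.mod_eq_of_lt ht] at this

end Fin

namespace FinHypergraph

variable {α : Type} {G : FinHypergraph α}

namespace Walk

lemma concat {u v w : α} {p : ℕ} (h : G.Walk u v p) {e : Finset α} (he : e ∈ G.edges)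
    (hv : v ∈ e) (hw : w ∈ e) (hne : v ≠ w) : G.Walk u w (p + 1) := by
  induction h with
  | nil x => exact cons w e he hv hw hne (nil w)
  | cons x e' he' hu hx hne' _ ih => exact cons x e' he' hu hx hne' (ih hv hne)

lemma reverse {u v : α} {p : ℕ} (h : G.Walk u v p) : G.Walk v u p := by
  induction h with
  | nil x => exact nil x
  | cons x e he hu hx hne _ ih => exact ih.concat he hx hu hne.symm

lemma dist_le {u v : α} {p : ℕ} (h : G.Walk u v p) : G.dist u v ≤ p := Nat.sInf_le h

end Walk

lemma walk_dist {u v : α} {p : ℕ} (h : G.Walk u v p) : G.Walk u v (G.dist u v) :=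
  Nat.sInf_mem ⟨p, h⟩

@[simp]
lemma dist_self (u : α) : G.dist u u = 0 :=
  Nat.le_zero.mp (Walk.nil u).dist_le

lemma dist_comm (u v : α) : G.dist u v = G.dist v u := by
  suffices h : ∀ u v : α, G.dist v u ≤ G.dist u v from le_antisymm (h v u) (h u v)
  intro u v
  rcases Set.eq_empty_or_nonempty {p | G.Walk u v p} with h | ⟨p, hp⟩
  · have h' : {p | G.Walk v u p} = ∅ :=
      Set.eq_empty_of_forall_notMem fun p hp => h.subset hp.reverse
    simp only [dist, h, h', le_refl]
  · exact (walk_dist hp).reverse.dist_le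

lemma one_le_dist {u v : α} {p : ℕ} (huv : G.Walk u v p) (hne : u ≠ v) : 1 ≤ G.dist u v := by
  by_contra h0
  have hw := walk_dist huv
  rw [Nat.lt_one_iff.mp (not_le.mp h0)] at hw
  cases hw
  exact hne rfl

lemma dist_eq_one_iff {u v : α} {p : ℕ} (huv : G.Walk u v p) :
    G.dist u v = 1 ↔ u ≠ v ∧ ∃ e ∈ G.edges, u ∈ e ∧ v ∈ e := by
  constructor
  · intro h
    have hw := walk_dist huv
    rw [h] at hw
    rcases hw with _ | ⟨_, e, he, hu, hv, hne, hw⟩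
    cases hw
    exact ⟨hne, e, he, hu, hv⟩
  · rintro ⟨hne, e, he, hu, hv⟩
    have := (Walk.cons v e he hu hv hne (Walk.nil v)).dist_le
    have := one_le_dist huv hne
    omega

lemma two_dvd_sum_offDiag (s : Finset α) (f : α → α → ℕ)
    (hf : ∀ a b, f a b = f b a) : 2 ∣ ∑ q ∈ s.offDiag, f q.1 q.2 := by
  rw [← ZMod.natCast_eq_zero_iff, Nat.cast_sum]
  refine Finset.sum_involution (fun q _ => q.swap) (fun q _ => ?_) (fun q hq _ => ?_)
    (fun q hq => ?_) (fun q _ => q.swap_swap)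
  · rw [Prod.fst_swap, Prod.snd_swap, hf q.2 q.1, CharTwo.add_self_eq_zero]
  · exact fun hswap => (Finset.mem_offDiag.mp hq).2.2 (congrArg Prod.snd hswap)
  · obtain ⟨h1, h2, h12⟩ := Finset.mem_offDiag.mp hq
    exact Finset.mem_offDiag.mpr ⟨h2, h1, h12.symm⟩

lemma two_mul_trans [DecidableEq α] :
    2 * G.trans = ∑ q ∈ G.verts.offDiag, G.dist q.1 q.2 := by
  have hsum : ∑ u ∈ G.verts, ∑ v ∈ G.verts, G.dist u v =
      ∑ q ∈ G.verts.offDiag, G.dist q.1 q.2 := by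
    rw [← Finset.sum_product', ← Finset.diag_union_offDiag,
      Finset.sum_union (Finset.disjoint_diag_offDiag _), add_eq_right]
    exact Finset.sum_eq_zero fun q hq => by rw [(Finset.mem_diag.mp hq).2, dist_self]
  rw [trans, hsum]
  exact Nat.mul_div_cancel' (two_dvd_sum_offDiag _ _ dist_comm)

lemma diam_le_iff {d : ℕ} : G.diam ≤ d ↔ ∀ q ∈ G.verts.offDiag, G.dist q.1 q.2 ≤ d := by
  simp only [diam, Finset.sup_le_iff, Finset.mem_offDiag, and_imp, Prod.forall]
  refine ⟨fun h u v hu hv _ => h u hu v hv, fun h u hu v hv => ?_⟩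
  rcases eq_or_ne u v with rfl | huv
  · simp
  · exact h u v hu hv huv

lemma exists_cycle_of_seq [DecidableEq α] {ℓ : ℕ} (hℓ : 2 ≤ ℓ) (w : ℕ → α)
    (h : ℕ → Finset α) (hh : ∀ t < ℓ, h t ∈ G.edges)
    (hinj : ∀ t < ℓ, ∀ s < ℓ, h t = h s → t = s)
    (winj : ∀ t < ℓ, ∀ s < ℓ, w t = w s → t = s) (hw : ∀ t < ℓ, w t ∈ h t)
    (hw' : ∀ t, t + 1 < ℓ → w (t + 1) ∈ h t) (hclose : w 0 ∈ h (ℓ - 1)) :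
    ∃ C : G.Cycle, C.length = ℓ ∧ C.edgeFinset = (Finset.range ℓ).image h := by
  obtain ⟨n, rfl⟩ : ∃ n, ℓ = n + 2 := ⟨ℓ - 2, by omega⟩
  refine ⟨⟨n, fun i => w i, fun i => h i, fun i => hh i i.isLt,
    fun i j hij => Fin.ext (hinj i i.isLt j j.isLt hij),
    fun i j hij => Fin.ext (winj i i.isLt j j.isLt hij), fun i => hw i i.isLt, fun i => ?_⟩,
    rfl, Finset.ext fun f => ?_⟩
  · rw [Fin.val_add_one]
    split_ifs with hi
    · rw [hi, Fin.val_last]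
      exact hclose
    · exact hw' i (by have := Fin.val_lt_last hi; omega)
  · simp only [Cycle.edgeFinset, Finset.mem_image, Finset.mem_univ, true_and, Finset.mem_range]
    exact ⟨fun ⟨i, hi⟩ => ⟨i, i.isLt, hi⟩, fun ⟨t, ht, hf⟩ => ⟨⟨t, ht⟩, hf⟩⟩

lemma Cycle.card_edgeFinset [DecidableEq α] (C : G.Cycle) : C.edgeFinset.card = C.length := by
  rw [Cycle.edgeFinset, Finset.card_image_of_injective _ C.einj, Finset.card_univ,
    Fintype.card_fin, Cycle.length]

lemma Cycle.length_eq [DecidableEq α] (huniq : ∀ C C' : G.Cycle, C.edgeFinset = C'.edgeFinset)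
    (C C' : G.Cycle) : C.length = C'.length := by
  rw [← C.card_edgeFinset, ← C'.card_edgeFinset, huniq]

def Cycle.transfer {H : FinHypergraph α} (C : G.Cycle) (h : ∀ i, C.e i ∈ H.edges) : H.Cycle :=
  ⟨C.n, C.v, C.e, h, C.einj, C.vinj, C.mem_fst, C.mem_snd⟩

lemma Cycle.mem_pred (C : G.Cycle) (i : Fin (C.n + 2)) : C.v i ∈ C.e (i - 1) := by
  simpa using C.mem_snd (i - 1)

lemma Cycle.two_le_degree [DecidableEq α] (C : G.Cycle) (i : Fin (C.n + 2)) :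
    2 ≤ G.degree (C.v i) := by
  have hne : C.e (i - 1) ≠ C.e i := C.einj.ne (by simp)
  have hsub : {C.e (i - 1), C.e i} ⊆ G.edges.filter (C.v i ∈ ·) := by
    simp only [Finset.insert_subset_iff, Finset.singleton_subset_iff, Finset.mem_filter]
    exact ⟨⟨C.he _, C.mem_pred i⟩, C.he i, C.mem_fst i⟩
  simpa [degree, Finset.card_pair hne] using Finset.card_le_card hsub

/-- A Berge path with edges `g 0, …, g r` and joints `b i ∈ g i ∩ g (i + 1)` for `i < r`;
the values of `g` and `b` outside these ranges are irrelevant. -/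
structure BergePath (G : FinHypergraph α) where
  r : ℕ
  g : ℕ → Finset α
  b : ℕ → α
  g_mem : ∀ i ≤ r, g i ∈ G.edges
  g_inj : ∀ i ≤ r, ∀ j ≤ r, g i = g j → i = j
  b_inj : ∀ i < r, ∀ j < r, b i = b j → i = j
  b_mem : ∀ i < r, b i ∈ g i
  b_mem_succ : ∀ i < r, b i ∈ g (i + 1)

namespace BergePath

lemma r_lt_card_edges (P : BergePath G) : P.r < G.edges.card := by
  have := Finset.card_le_card_of_injOn P.g
    (fun i hi => P.g_mem i (Nat.lt_succ_iff.mp (Finset.mem_range.mp hi)))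
    (fun i hi j hj => P.g_inj i (Nat.lt_succ_iff.mp (Finset.mem_range.mp hi))
      j (Nat.lt_succ_iff.mp (Finset.mem_range.mp hj)))
  rw [Finset.card_range] at this
  omega

@[simps]
def reverse (P : BergePath G) : BergePath G where
  r := P.r
  g i := P.g (P.r - i)
  b i := P.b (P.r - 1 - i)
  g_mem i _ := P.g_mem _ (Nat.sub_le _ _)
  g_inj i hi j hj h := by have := P.g_inj _ (Nat.sub_le _ _) _ (Nat.sub_le _ _) h; omega
  b_inj i hi j hj h := by have := P.b_inj _ (by omega) _ (by omega) h; omega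
  b_mem i hi := by
    simpa [show P.r - 1 - i + 1 = P.r - i by omega] using P.b_mem_succ (P.r - 1 - i) (by omega)
  b_mem_succ i hi := by
    simpa [show P.r - (i + 1) = P.r - 1 - i by omega] using P.b_mem (P.r - 1 - i) (by omega)

lemma exists_extend (P : BergePath G) {x : α} {f : Finset α} (hf : f ∈ G.edges)
    (hxr : x ∈ P.g P.r) (hxf : x ∈ f) (hfg : ∀ i ≤ P.r, P.g i ≠ f)
    (hxb : ∀ i < P.r, P.b i ≠ x) :
    ∃ P' : BergePath G, P'.r = P.r + 1 ∧ ∀ i ≤ P.r, P'.g i = P.g i := by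
  refine ⟨⟨P.r + 1, fun i => if i = P.r + 1 then f else P.g i,
    fun i => if i = P.r then x else P.b i, fun i hi => ?_, fun i hi j hj h => ?_,
    fun i hi j hj h => ?_, fun i hi => ?_, fun i hi => ?_⟩, rfl, fun i hi => if_neg (by omega)⟩
  · split_ifs
    · exact hf
    · exact P.g_mem i (by omega)
  · split_ifs at h with h1 h2 h2
    · omega
    · exact absurd h.symm (hfg j (by omega))
    · exact absurd h (hfg i (by omega))
    · exact P.g_inj i (by omega) j (by omega) h
  · split_ifs at h with h1 h2 h2
    · omega
    · exact absurd h.symm (hxb j (by omega))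
    · exact absurd h (hxb i (by omega))
    · exact P.b_inj i (by omega) j (by omega) h
  · rw [if_neg (by omega)]
    split_ifs with h1
    · exact h1 ▸ hxr
    · exact P.b_mem i (by omega)
  · simp only [add_left_inj]
    split_ifs with h1
    · exact hxf
    · exact P.b_mem_succ i (by omega)

/-- A vertex `x` of the last edge lying also in `g j` closes the cycle
`x, b j, …, b (r - 1)` through the edges `g j, …, g r`. -/
lemma exists_cycle_of_mem [DecidableEq α] (P : BergePath G) {x : α} {j : ℕ} (hj : j < P.r)
    (hxj : x ∈ P.g j) (hxr : x ∈ P.g P.r) (hxb : ∀ i, j ≤ i → i < P.r → P.b i ≠ x) :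
    ∃ C : G.Cycle, C.edgeFinset = (Finset.range (P.r + 1 - j)).image fun t => P.g (j + t) := by
  obtain ⟨C, -, hC⟩ := exists_cycle_of_seq (G := G) (ℓ := P.r + 1 - j) (by omega)
    (fun t => if t = 0 then x else P.b (j + t - 1)) (fun t => P.g (j + t))
    (fun t ht => P.g_mem _ (by omega))
    (fun t ht s hs h => by have := P.g_inj _ (by omega) _ (by omega) h; omega)
    (fun t ht s hs h => by
      split_ifs at h with ht0 hs0 hs0
      · omega
      · exact absurd h.symm (hxb _ (by omega) (by omega))
      · exact absurd h (hxb _ (by omega) (by omega))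
      · have := P.b_inj _ (by omega) _ (by omega) h
        omega)
    (fun t ht => by
      split_ifs with ht0
      · simpa [ht0] using hxj
      · simpa [show j + t - 1 + 1 = j + t by omega] using P.b_mem_succ (j + t - 1) (by omega))
    (fun t ht => by simpa [show j + (t + 1) - 1 = j + t by omega] using P.b_mem _ (by omega))
    (by simpa [show j + (P.r + 1 - j - 1) = P.r by omega] using hxr)
  exact ⟨C, hC⟩

end BergePath

lemma exists_edge_mem_of_connected (hgood : G.Good) (hconn : G.Connected) {e₀ : Finset α}
    (he₀ : e₀ ∈ G.edges) (hcard : 2 ≤ e₀.card) {v : α} (hv : v ∈ G.verts) :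
    ∃ e ∈ G.edges, v ∈ e := by
  obtain ⟨u, hu, hne⟩ := Finset.exists_mem_ne hcard v
  obtain ⟨p, hw⟩ := hconn v hv u (hgood e₀ he₀ hu)
  rcases hw with _ | ⟨_, e, he, hv, -, -, -⟩
  · exact absurd rfl hne
  · exact ⟨e, he, hv⟩

def IsLinear (G : FinHypergraph α) : Prop :=
  ∀ e ∈ G.edges, ∀ f ∈ G.edges, e ≠ f → (↑e ∩ ↑f : Set α).Subsingleton

section DecidableEq

variable [DecidableEq α] {e : Finset α} {a : α}

lemma isLinear_of_three_le_length (hcyc : ∀ C : G.Cycle, 3 ≤ C.length) : G.IsLinear := by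
  intro e he f hf hef u ⟨hue, huf⟩ v ⟨hve, hvf⟩
  by_contra huv
  obtain ⟨C, hC, -⟩ := exists_cycle_of_seq (G := G) le_rfl (fun t => if t = 0 then u else v)
    (fun t => if t = 0 then e else f)
    (fun t ht => by interval_cases t <;> simpa)
    (fun t ht s hs h => by interval_cases t <;> interval_cases s <;> simp_all)
    (fun t ht s hs h => by interval_cases t <;> interval_cases s <;> simp_all)
    (fun t ht => by interval_cases t <;> simpa)
    (fun t ht => by rw [show t = 0 by omega]; simpa) (by simpa)
  have := hcyc C
  omega

section Chords

open Fin.NatCast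

/-- Otherwise `x` would close a shorter cycle through the arc `e_i, …, e_{i+d}`. -/
lemma Cycle.exists_v_eq_of_mem_of_mem
    (huniq : ∀ C C' : G.Cycle, C.edgeFinset = C'.edgeFinset) (C : G.Cycle) {x : α}
    {i : Fin (C.n + 2)} {d : ℕ} (hd : 1 ≤ d) (hdn : d ≤ C.n) (hxi : x ∈ C.e i)
    (hxd : x ∈ C.e (i + d)) :
    ∃ t, 1 ≤ t ∧ t ≤ d ∧ C.v (i + t) = x := by
  by_contra! hxv
  obtain ⟨C', hlen, -⟩ := exists_cycle_of_seq (G := G) (ℓ := d + 1) (by omega)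
    (fun t => if t = 0 then x else C.v (i + t)) (fun t => C.e (i + t)) (fun t _ => C.he _)
    (fun t ht s hs h => Fin.eq_of_add_natCast_eq i (by omega) (by omega) (C.einj h))
    (fun t ht s hs h => by
      split_ifs at h with ht0 hs0 hs0
      · omega
      · exact absurd h.symm (hxv s (by omega) (by omega))
      · exact absurd h (hxv t (by omega) (by omega))
      · exact Fin.eq_of_add_natCast_eq i (by omega) (by omega) (C.vinj h))
    (fun t _ => by
      split_ifs with ht0
      · simpa [ht0] using hxi
      · exact C.mem_fst _)
    (fun t _ => by simpa [Nat.cast_succ, ← add_assoc] using C.mem_snd (i + t))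
    (by simpa using hxd)
  have := C'.length_eq huniq C
  rw [hlen, Cycle.length] at this
  omega

lemma Cycle.eq_or_eq_add_one_of_v_mem
    (huniq : ∀ C C' : G.Cycle, C.edgeFinset = C'.edgeFinset) (C : G.Cycle)
    {l i : Fin (C.n + 2)} (h : C.v l ∈ C.e i) : l = i ∨ l = i + 1 := by
  set D := (l - i).val with hD
  have hl : l = i + (D : Fin (C.n + 2)) := by simp [hD]
  have hDlt : D < C.n + 2 := (l - i).isLt
  rcases Nat.lt_or_ge D 2 with hD2 | hD2
  · interval_cases D <;> simp [hl]
  have hxd : C.v l ∈ C.e (i + (D - 1 : ℕ)) := by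
    have hl' : l = i + ((D - 1 : ℕ) : Fin (C.n + 2)) + 1 := by
      rw [add_assoc, ← Nat.cast_add_one, Nat.sub_add_cancel (by omega)]
      exact hl
    rw [hl']
    exact C.mem_snd _
  obtain ⟨t, ht1, htd, hvt⟩ :=
    C.exists_v_eq_of_mem_of_mem huniq (d := D - 1) (by omega) (by omega) h hxd
  have := Fin.eq_of_add_natCast_eq i (by omega) hDlt ((C.vinj hvt).trans hl)
  omega

lemma Cycle.eq_of_mem_erase_of_mem_erase
    (huniq : ∀ C C' : G.Cycle, C.edgeFinset = C'.edgeFinset) (C : G.Cycle) (hC : 3 ≤ C.length)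
    {x : α} {i j : Fin (C.n + 2)} (hi : x ∈ (C.e i).erase (C.v i))
    (hj : x ∈ (C.e j).erase (C.v j)) :
    i = j := by
  rw [Finset.mem_erase] at hi hj
  by_cases hx : ∃ l, C.v l = x
  · obtain ⟨l, rfl⟩ := hx
    rcases C.eq_or_eq_add_one_of_v_mem huniq hi.2 with rfl | rfl
    · exact absurd rfl hi.1
    rcases C.eq_or_eq_add_one_of_v_mem huniq hj.2 with h | h
    · exact absurd (congrArg C.v h) hj.1
    · exact add_right_cancel h
  push Not at hx
  set D := (j - i).val with hD
  have hj' : j = i + (D : Fin (C.n + 2)) := by simp [hD]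
  have hDlt : D < C.n + 2 := (j - i).isLt
  by_contra hij
  have hD0 : D ≠ 0 := fun h0 => hij (by simp [hj', h0])
  rcases Nat.lt_or_ge D (C.n + 1) with hDn | hDn
  · obtain ⟨t, -, -, ht⟩ :=
      C.exists_v_eq_of_mem_of_mem huniq (d := D) (by omega) (by omega) hi.2 (hj' ▸ hj.2)
    exact hx _ ht
  · have hji : i = j + ((1 : ℕ) : Fin (C.n + 2)) := by
      rw [hj', show D = C.n + 1 by omega, add_assoc, ← Nat.cast_add, Fin.natCast_self, add_zero]
    obtain ⟨t, -, -, ht⟩ := C.exists_v_eq_of_mem_of_mem huniq (d := 1) le_rfl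
      (by rw [Cycle.length] at hC; omega) hj.2 (hji ▸ hi.2)
    exact hx _ ht

end Chords

lemma card_verts_of_edges_eq_cycle {k : ℕ} (hk : 2 ≤ k) (hgood : G.Good) (hunif : G.Uniform k)
    (hconn : G.Connected) (huniq : ∀ C C' : G.Cycle, C.edgeFinset = C'.edgeFinset)
    (C : G.Cycle) (hC : 3 ≤ C.length) (hE : G.edges = C.edgeFinset) :
    G.verts.card = G.edges.card * (k - 1) := by
  have hcover : G.verts = Finset.univ.biUnion fun i => (C.e i).erase (C.v i) := by
    ext x
    simp only [Finset.mem_biUnion, Finset.mem_univ, true_and, Finset.mem_erase]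
    constructor
    · intro hx
      obtain ⟨e, he, hxe⟩ :=
        exists_edge_mem_of_connected hgood hconn (C.he 0) (by rw [hunif _ (C.he 0)]; omega) hx
      rw [hE, Cycle.edgeFinset, Finset.mem_image] at he
      obtain ⟨i, -, rfl⟩ := he
      by_cases hxi : x = C.v i
      · subst hxi
        exact ⟨i - 1, (C.vinj.ne (by simp : i - 1 ≠ i)).symm, C.mem_pred i⟩
      · exact ⟨i, hxi, hxe⟩
    · rintro ⟨i, -, hx⟩
      exact hgood _ (C.he i) hx
  have hdisj : (↑(Finset.univ : Finset (Fin (C.n + 2))) : Set _).PairwiseDisjoint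
      fun i => (C.e i).erase (C.v i) := fun i _ j _ hij =>
    Finset.disjoint_left.mpr fun _ hxi hxj =>
      hij (C.eq_of_mem_erase_of_mem_erase huniq hC hxi hxj)
  have hcard : ∀ i, ((C.e i).erase (C.v i)).card = k - 1 := fun i => by
    rw [Finset.card_erase_of_mem (C.mem_fst i), hunif _ (C.he i)]
  rw [hcover, Finset.card_biUnion hdisj, Finset.sum_congr rfl fun i _ => hcard i,
    Finset.sum_const, smul_eq_mul, Finset.card_univ, Fintype.card_fin, hE, C.card_edgeFinset,
    Cycle.length]

def branchVerts (G : FinHypergraph α) (e : Finset α) : Finset α :=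
  e.filter fun v => 2 ≤ G.degree v

lemma BergePath.exists_extend_or_exists_cycle
    (hbr : ∀ e ∈ G.edges, 2 ≤ (G.branchVerts e).card) (P : BergePath G) :
    (∃ P' : BergePath G, P'.r = P.r + 1 ∧ ∀ i ≤ P.r, P'.g i = P.g i) ∨
      ∃ s ≤ P.r, ∃ C : G.Cycle,
        C.edgeFinset = (Finset.range (P.r + 1 - s)).image fun t => P.g (s + t) := by
  obtain ⟨x, hx, hxb⟩ := Finset.exists_mem_ne (hbr _ (P.g_mem P.r le_rfl)) (P.b (P.r - 1))
  obtain ⟨hxr, hxdeg⟩ := Finset.mem_filter.mp hx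
  obtain ⟨f, hf, hfr⟩ := Finset.exists_mem_ne hxdeg (P.g P.r)
  obtain ⟨hfE, hxf⟩ := Finset.mem_filter.mp hf
  by_cases hjoint : ∃ j < P.r, P.b j = x
  · obtain ⟨j, hj, rfl⟩ := hjoint
    have hj1 : j + 1 < P.r := by
      by_contra
      exact hxb (by rw [show P.r - 1 = j by omega])
    refine Or.inr ⟨j + 1, hj1.le, P.exists_cycle_of_mem hj1 (P.b_mem_succ j hj) hxr
      fun i hi hir h => ?_⟩
    have := P.b_inj i hir j hj h
    omega
  push Not at hjoint
  by_cases hold : ∃ j ≤ P.r, P.g j = f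
  · obtain ⟨j, hj, rfl⟩ := hold
    have hjr : j < P.r := lt_of_le_of_ne hj fun h => hfr (h ▸ rfl)
    exact Or.inr ⟨j, hj, P.exists_cycle_of_mem hjr hxf hxr fun i _ hi => hjoint i hi⟩
  push Not at hold
  exact Or.inl (P.exists_extend hfE hxr hxf hold hjoint)

/-- A longest Berge path through an edge off the cycle `C` closes, at each of its ends, a cycle
through its final edges; both cycles are `C`, which puts its first edge among its last ones. -/
lemma edges_eq_of_two_le_card_branchVerts
    (huniq : ∀ C C' : G.Cycle, C.edgeFinset = C'.edgeFinset) (C : G.Cycle)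
    (hbr : ∀ e ∈ G.edges, 2 ≤ (G.branchVerts e).card) : G.edges = C.edgeFinset := by
  classical
  by_contra hne
  obtain ⟨g₀, hg₀, hg₀C⟩ : ∃ g₀ ∈ G.edges, g₀ ∉ C.edgeFinset := by
    by_contra! h
    refine hne (Finset.Subset.antisymm h fun f hf => ?_)
    obtain ⟨i, -, rfl⟩ := Finset.mem_image.mp hf
    exact C.he i
  let Q : ℕ → Prop := fun t =>
    ∃ P : BergePath G, P.r = t ∧ ∃ i ≤ t, P.g i ∉ C.edgeFinset
  have hQ₀ : Q 0 := ⟨⟨0, fun _ => g₀, fun _ => C.v 0, fun _ _ => hg₀,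
    fun i hi j hj _ => by omega, fun i hi => by omega, fun i hi => by omega,
    fun i hi => by omega⟩, rfl, 0, le_rfl, hg₀C⟩
  set R := Nat.findGreatest Q G.edges.card
  have hmax : ¬ Q (R + 1) := fun hQ => Nat.findGreatest_is_greatest (Nat.lt_succ_self R)
    (by obtain ⟨P, hPr, -⟩ := hQ; have := P.r_lt_card_edges; omega) hQ
  have hcycle : ∀ P : BergePath G, P.r = R → (∃ i ≤ R, P.g i ∉ C.edgeFinset) →
      ∃ s ≤ R, C.edgeFinset = (Finset.range (R + 1 - s)).image fun t => P.g (s + t) := by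
    intro P hPr hoff
    rcases P.exists_extend_or_exists_cycle hbr with ⟨P', hP'r, hP'g⟩ | ⟨s, hs, C', hC'⟩
    · obtain ⟨i, hi, hiC⟩ := hoff
      exact absurd ⟨P', by omega, i, by omega, hP'g i (by omega) ▸ hiC⟩ hmax
    · exact ⟨s, hPr ▸ hs, hPr ▸ huniq C C' ▸ hC'⟩
  obtain ⟨P, hPr, p₀, hp₀, hp₀C⟩ : Q R := Nat.findGreatest_spec (Nat.zero_le _) hQ₀
  obtain ⟨s, hs, hCs⟩ := hcycle P hPr ⟨p₀, hp₀, hp₀C⟩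
  obtain ⟨s', hs', hCs'⟩ := hcycle P.reverse hPr
    ⟨P.r - p₀, by omega, by rwa [BergePath.reverse_g, Nat.sub_sub_self (hPr ▸ hp₀)]⟩
  have hg0 : P.g 0 ∈ C.edgeFinset := by
    rw [hCs']
    refine Finset.mem_image.mpr ⟨R - s', by simp; omega, ?_⟩
    simp [hPr, show s' + (R - s') = R by omega]
  rw [hCs, Finset.mem_image] at hg0
  obtain ⟨t, ht, hgt⟩ := hg0
  have hs0 : s = 0 := by
    have := P.g_inj _ (by simp at ht; omega) 0 (Nat.zero_le _) hgt
    omega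
  exact hp₀C (hCs ▸ Finset.mem_image.mpr ⟨p₀, by simp; omega, by rw [hs0, zero_add]⟩)

def IsPendantAt (G : FinHypergraph α) (e : Finset α) (a : α) : Prop :=
  ∀ z ∈ e, z ≠ a → G.degree z ≤ 1

def prune (G : FinHypergraph α) (e : Finset α) (a : α) : FinHypergraph α :=
  ⟨G.verts \ e.erase a, G.edges.erase e⟩

namespace IsPendantAt

lemma eq_of_mem (hP : G.IsPendantAt e a) (he : e ∈ G.edges) {z : α} (hz : z ∈ e)
    (hza : z ≠ a) {f : Finset α} (hf : f ∈ G.edges) (hzf : z ∈ f) : f = e :=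
  Finset.card_le_one.mp (hP z hz hza) f (Finset.mem_filter.mpr ⟨hf, hzf⟩) e
    (Finset.mem_filter.mpr ⟨he, hz⟩)

lemma cycle_e_ne (hP : G.IsPendantAt e a) (C : G.Cycle) (i : Fin (C.n + 2)) : C.e i ≠ e := by
  intro h
  by_cases hvi : C.v i = a
  · have := hP _ (h ▸ C.mem_snd i) (hvi ▸ C.vinj.ne (by simp))
    have := C.two_le_degree (i + 1)
    omega
  · have := hP _ (h ▸ C.mem_fst i) hvi
    have := C.two_le_degree i
    omega

/-- A walk between vertices outside `e \ {a}` never needs `e`: inside it, `e` can only be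
entered and left again through the edge `e` itself, which can be shortcut. -/
lemma exists_walk_prune (hP : G.IsPendantAt e a) (he : e ∈ G.edges) (p : ℕ) :
    ∀ {u v : α}, G.Walk u v p → (u ∈ e → u = a) → (v ∈ e → v = a) →
      ∃ q, (G.prune e a).Walk u v q := by
  induction p using Nat.strong_induction_on with
  | _ p ih =>
  intro u v hw hu hv
  rcases hw with _ | ⟨w, f, hf, huf, hwf, huw, hrest⟩
  · exact ⟨0, Walk.nil _⟩
  rename_i p'
  by_cases hwP : w ∈ e ∧ w ≠ a
  · have hfe := hP.eq_of_mem he hwP.1 hwP.2 hf hwf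
    rcases hrest with _ | ⟨w₂, f₂, hf₂, hwf₂, hw₂f₂, -, hrest₂⟩
    · exact absurd (hv hwP.1) hwP.2
    rename_i p''
    have hf₂e := hP.eq_of_mem he hwP.1 hwP.2 hf₂ hwf₂
    by_cases huw₂ : u = w₂
    · subst huw₂
      exact ih p'' (by omega) hrest₂ hu hv
    · exact ih (p'' + 1) (by omega)
        (Walk.cons w₂ e he (hfe ▸ huf) (hf₂e ▸ hw₂f₂) huw₂ hrest₂) hu hv
  · have hw : w ∈ e → w = a := fun hwe => not_not.mp fun hwa => hwP ⟨hwe, hwa⟩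
    have hfe : f ≠ e := by
      rintro rfl
      exact huw ((hu huf).trans (hw hwf).symm)
    obtain ⟨q, hq⟩ := ih p' (by omega) hrest hw hv
    exact ⟨q + 1, Walk.cons w f (Finset.mem_erase.mpr ⟨hfe, hf⟩) huf hwf huw hq⟩

end IsPendantAt

lemma exists_isPendantAt (hbr : (G.branchVerts e).card ≤ 1) (hne : e.Nonempty) :
    ∃ a ∈ e, G.IsPendantAt e a := by
  rcases (G.branchVerts e).eq_empty_or_nonempty with h | ⟨a, ha⟩
  · obtain ⟨a, ha⟩ := hne
    refine ⟨a, ha, fun z hz _ => ?_⟩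
    by_contra hz2
    have : z ∈ G.branchVerts e := Finset.mem_filter.mpr ⟨hz, by omega⟩
    simp [h] at this
  · refine ⟨a, (Finset.mem_filter.mp ha).1, fun z hz hza => ?_⟩
    by_contra hz2
    exact hza (Finset.card_le_one.mp hbr z (Finset.mem_filter.mpr ⟨hz, by omega⟩) a ha)

lemma Good.prune (hgood : G.Good) (he : e ∈ G.edges) (hP : G.IsPendantAt e a) :
    (G.prune e a).Good := by
  intro f hf x hx
  obtain ⟨hfe, hf⟩ := Finset.mem_erase.mp hf
  refine Finset.mem_sdiff.mpr ⟨hgood f hf hx, fun hxe => ?_⟩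
  obtain ⟨hxa, hxe⟩ := Finset.mem_erase.mp hxe
  exact hfe (hP.eq_of_mem he hxe hxa hf hx)

lemma Uniform.prune {k : ℕ} (hunif : G.Uniform k) : (G.prune e a).Uniform k :=
  fun f hf => hunif f (Finset.mem_of_mem_erase hf)

lemma Unicyclic.prune (huni : G.Unicyclic) (he : e ∈ G.edges) (hP : G.IsPendantAt e a) :
    (G.prune e a).Unicyclic := by
  obtain ⟨hconn, ⟨C⟩, huniq⟩ := huni
  refine ⟨fun u hu v hv => ?_,
    ⟨C.transfer fun i => Finset.mem_erase.mpr ⟨hP.cycle_e_ne C i, C.he i⟩⟩, fun C₁ C₂ =>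
      huniq (C₁.transfer fun i => Finset.mem_of_mem_erase (C₁.he i))
        (C₂.transfer fun i => Finset.mem_of_mem_erase (C₂.he i))⟩
  obtain ⟨hu, hue⟩ := Finset.mem_sdiff.mp hu
  obtain ⟨hv, hve⟩ := Finset.mem_sdiff.mp hv
  obtain ⟨p, hw⟩ := hconn u hu v hv
  exact hP.exists_walk_prune he p hw
    (fun h => not_not.mp fun hua => hue (Finset.mem_erase.mpr ⟨hua, h⟩))
    (fun h => not_not.mp fun hva => hve (Finset.mem_erase.mpr ⟨hva, h⟩))

lemma card_verts_prune_add (hgood : G.Good) (he : e ∈ G.edges) (ha : a ∈ e) :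
    (G.prune e a).verts.card + (e.card - 1) = G.verts.card := by
  have hsub : e.erase a ⊆ G.verts := (Finset.erase_subset a e).trans (hgood e he)
  rw [prune, Finset.card_sdiff_of_subset hsub, ← Finset.card_erase_of_mem ha,
    Nat.sub_add_cancel (Finset.card_le_card hsub)]

lemma card_verts_of_unicyclic {k : ℕ} (hk : 2 ≤ k) (G : FinHypergraph α) (hgood : G.Good)
    (hunif : G.Uniform k) (huni : G.Unicyclic) (hcyc : ∀ C : G.Cycle, 3 ≤ C.length) :
    G.verts.card = G.edges.card * (k - 1) := by
  induction hm : G.edges.card using Nat.strong_induction_on generalizing G with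
  | _ m ih =>
  obtain ⟨hconn, ⟨C⟩, huniq⟩ := id huni
  by_cases hbr : ∀ e ∈ G.edges, 2 ≤ (G.branchVerts e).card
  · rw [← hm]
    exact card_verts_of_edges_eq_cycle hk hgood hunif hconn huniq C (hcyc C)
      (edges_eq_of_two_le_card_branchVerts huniq C hbr)
  push Not at hbr
  obtain ⟨e, he, hbr⟩ := hbr
  obtain ⟨a, ha, hP⟩ :=
    exists_isPendantAt (Nat.lt_succ_iff.mp hbr) (Finset.card_pos.mp (by rw [hunif e he]; omega))
  have hm' : (G.prune e a).edges.card = m - 1 := by rw [prune, Finset.card_erase_of_mem he, hm]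
  have hm0 : 0 < m := hm ▸ Finset.card_pos.mpr ⟨e, he⟩
  have ih' := ih (m - 1) (by omega) (G.prune e a) (hgood.prune he hP) hunif.prune
    (huni.prune he hP) (fun C => hcyc (C.transfer fun i => Finset.mem_of_mem_erase (C.he i))) hm'
  rw [← card_verts_prune_add hgood he ha, ih', hunif e he]
  obtain ⟨m, rfl⟩ := Nat.exists_eq_add_of_lt hm0
  simp [add_mul]

lemma card_filter_dist_eq_one {k : ℕ} (hgood : G.Good) (hunif : G.Uniform k)
    (hconn : G.Connected) (hlin : G.IsLinear) :
    #{q ∈ G.verts.offDiag | G.dist q.1 q.2 = 1} = G.edges.card * (k * k - k) := by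
  have hpairs : {q ∈ G.verts.offDiag | G.dist q.1 q.2 = 1} = G.edges.biUnion Finset.offDiag := by
    ext ⟨u, v⟩
    simp only [Finset.mem_filter, Finset.mem_offDiag, Finset.mem_biUnion]
    constructor
    · rintro ⟨⟨hu, hv, -⟩, hd⟩
      obtain ⟨p, hw⟩ := hconn u hu v hv
      obtain ⟨huv, e, he, hue, hve⟩ := (dist_eq_one_iff hw).mp hd
      exact ⟨e, he, hue, hve, huv⟩
    · rintro ⟨e, he, hue, hve, huv⟩
      refine ⟨⟨hgood e he hue, hgood e he hve, huv⟩, ?_⟩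
      have hw := Walk.cons v e he hue hve huv (Walk.nil v)
      exact (dist_eq_one_iff hw).mpr ⟨huv, e, he, hue, hve⟩
  have hdisj : (G.edges : Set (Finset α)).PairwiseDisjoint Finset.offDiag :=
    fun e he f hf hef => Finset.disjoint_left.mpr fun q hqe hqf => by
      obtain ⟨h1e, h2e, h12⟩ := Finset.mem_offDiag.mp hqe
      obtain ⟨h1f, h2f, -⟩ := Finset.mem_offDiag.mp hqf
      exact h12 (hlin e he f hf hef ⟨h1e, h1f⟩ ⟨h2e, h2f⟩)
  rw [hpairs, Finset.card_biUnion hdisj,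
    Finset.sum_congr rfl fun e he => by rw [Finset.offDiag_card, hunif e he],
    Finset.sum_const, smul_eq_mul]

end DecidableEq

end FinHypergraph

/-- For a `k`-uniform unicyclic hypergraph of size `m` whose unique cycle has
length at least `3` (`k ≥ 3`), `σ(G) ≥ (k-1)m[(k-1)m - 1 - k/2]`, with equality iff the
diameter of `G` is at most `2`. -/
theorem stmt3 {α : Type} [DecidableEq α] (k m : ℕ) (hk : 3 ≤ k) (G : FinHypergraph α)
    (hgood : G.Good) (hunif : G.Uniform k) (huni : G.Unicyclic)
    (hsize : G.edges.card = m) (hcyc : ∀ C : G.Cycle, 3 ≤ C.length) :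
    ((k : ℝ) - 1) * m * (((k : ℝ) - 1) * m - 1 - (k : ℝ) / 2) ≤ (G.trans : ℝ) ∧
    ((G.trans : ℝ) = ((k : ℝ) - 1) * m * (((k : ℝ) - 1) * m - 1 - (k : ℝ) / 2) ↔
      G.diam ≤ 2) := by
  have hconn := huni.1
  have hpos : ∀ q ∈ G.verts.offDiag, 1 ≤ G.dist q.1 q.2 := fun q hq => by
    obtain ⟨hu, hv, huv⟩ := Finset.mem_offDiag.mp hq
    obtain ⟨p, hw⟩ := hconn _ hu _ hv
    exact one_le_dist hw huv
  have hlow := Finset.two_mul_card_le_sum_add_card_filter_eq_one hpos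
  have hiff := Finset.sum_add_card_filter_eq_one_eq_iff hpos
  have hn := card_verts_of_unicyclic (by omega) G hgood hunif huni hcyc
  have hadj := card_filter_dist_eq_one hgood hunif hconn (isLinear_of_three_le_length hcyc)
  rw [← diam_le_iff] at hiff
  rw [← two_mul_trans, hadj, Finset.offDiag_card, hn, hsize] at hlow hiff
  have hkk : k ≤ k * k := Nat.le_mul_self k
  have hnn : m * (k - 1) ≤ m * (k - 1) * (m * (k - 1)) := Nat.le_mul_self _
  rw [← hiff]
  constructor
  · have := (Nat.cast_le (α := ℝ)).mpr hlow
    push_cast [Nat.cast_sub hkk, Nat.cast_sub hnn, Nat.cast_sub (by omega : 1 ≤ k)] at this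
    linarith
  · rw [← (Nat.cast_inj (R := ℝ))]
    push_cast [Nat.cast_sub hkk, Nat.cast_sub hnn, Nat.cast_sub (by omega : 1 ≤ k)]
    constructor <;> intro h <;> linarith
end

section
/- For k ≥ 3, let G = C^k_{2(k−1)}(H_1,...,H_{2(k−1)}) and let G* be obtained from G by moving all edges containing v_k in H_k from v_k to v_2. If Σ_{i=k+1}^{2(k−1)} |V(H_i)| ≥ |V(H_2)| and H_k has at least one edge, then σ(G*) > σ(G). -/
open Finset

/-- A (finite) hypergraph: a finite vertex set together with a finite family of edges,
each edge being a finite set of vertices. -/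
structure HGraph (α : Type) where
  verts : Finset α
  edges : Finset (Finset α)

namespace HGraph

variable {α β : Type}

/-- Every edge is a subset of the vertex set. -/
def Good (G : HGraph α) : Prop := ∀ e ∈ G.edges, e ⊆ G.verts

/-- `k`-uniform: every edge has cardinality `k`. -/
def Uniform (G : HGraph α) (k : ℕ) : Prop := ∀ e ∈ G.edges, e.card = k

/-- A walk of length `p` from `u` to `v`: an alternating sequence of vertices and edges,
with consecutive vertices distinct and both lying in the connecting edge. -/
inductive Walk (G : HGraph α) : α → α → ℕ → Prop
  | nil (v : α) : Walk G v v 0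
  | cons {u w : α} (v : α) {p : ℕ} (e : Finset α) (he : e ∈ G.edges)
      (hu : u ∈ e) (hv : v ∈ e) (hne : u ≠ v) (hw : Walk G v w p) :
      Walk G u w (p + 1)

def Connected (G : HGraph α) : Prop :=
  ∀ u ∈ G.verts, ∀ v ∈ G.verts, ∃ p, G.Walk u v p

/-- Distance: length of a shortest walk (equivalently, of a shortest path). -/
noncomputable def dist (G : HGraph α) (u v : α) : ℕ := sInf {p | G.Walk u v p}

/-- `σ_G(u) = ∑_{v ∈ V(G)} d_G(u,v)`. -/
noncomputable def transFrom [DecidableEq α] (G : HGraph α) (u : α) : ℕ :=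
  ∑ v ∈ G.verts, G.dist u v

/-- The transmission `σ(G)`: the sum of distances over all unordered pairs of
distinct vertices (distances being symmetric, this is half the sum over ordered pairs). -/
noncomputable def trans [DecidableEq α] (G : HGraph α) : ℕ :=
  (∑ u ∈ G.verts, ∑ v ∈ G.verts, G.dist u v) / 2

/-- `σ_G(A,B) = ∑_{a ∈ A, b ∈ B} d_G(a,b)`. -/
noncomputable def transBetween [DecidableEq α] (G : HGraph α) (A B : Finset α) : ℕ :=
  ∑ a ∈ A, ∑ b ∈ B, G.dist a b

/-- The diameter: the maximum distance between two vertices. -/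
noncomputable def diam (G : HGraph α) : ℕ :=
  G.verts.sup fun u => G.verts.sup fun v => G.dist u v

/-- The degree of a vertex: the number of edges containing it. -/
def degree [DecidableEq α] (G : HGraph α) (v : α) : ℕ :=
  (G.edges.filter fun e => v ∈ e).card

/-- A cycle of length `n+2` in `G`: vertices `v 0, …, v (n+1)` (all distinct) and
distinct edges `e 0, …, e (n+1)` of `G` with `v i, v (i+1) ∈ e i` (indices mod `n+2`). -/
structure Cycle (G : HGraph α) where
  n : ℕ
  v : Fin (n + 2) → α
  e : Fin (n + 2) → Finset α
  he : ∀ i, e i ∈ G.edges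
  einj : Function.Injective e
  vinj : Function.Injective v
  mem_fst : ∀ i, v i ∈ e i
  mem_snd : ∀ i, v (i + 1) ∈ e i

/-- The length of a cycle (its number of edges). -/
def Cycle.length {G : HGraph α} (C : G.Cycle) : ℕ := C.n + 2

/-- The set of edges of a cycle. -/
def Cycle.edgeFinset [DecidableEq α] {G : HGraph α} (C : G.Cycle) : Finset (Finset α) :=
  Finset.univ.image C.e

/-- Unicyclic: connected with exactly one cycle (all cycles have the same edge set). -/
def Unicyclic [DecidableEq α] (G : HGraph α) : Prop :=
  G.Connected ∧ Nonempty G.Cycle ∧ ∀ C C' : G.Cycle, C.edgeFinset = C'.edgeFinset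

/-- Isomorphism of hypergraphs. -/
def Isomorphic [DecidableEq β] (G : HGraph α) (H : HGraph β) : Prop :=
  ∃ f : α → β, Set.BijOn f ↑G.verts ↑H.verts ∧
    ∀ e : Finset α, e ⊆ G.verts → (e ∈ G.edges ↔ e.image f ∈ H.edges)

/-- Rename the vertices of a hypergraph along `f`. -/
def mapHG [DecidableEq β] (f : α → β) (G : HGraph α) : HGraph β :=
  ⟨G.verts.image f, G.edges.image (Finset.image f)⟩

def unionHG [DecidableEq α] (G H : HGraph α) : HGraph α :=
  ⟨G.verts ∪ H.verts, G.edges ∪ H.edges⟩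

def unionMany [DecidableEq α] {n : ℕ} (Hs : Fin n → HGraph α) : HGraph α :=
  ⟨Finset.univ.biUnion fun i => (Hs i).verts, Finset.univ.biUnion fun i => (Hs i).edges⟩

/-- Move the edge `e` from `u` to `x`: replace `e` by `(e \ {u}) ∪ {x}`. -/
def moveEdge [DecidableEq α] (G : HGraph α) (e : Finset α) (u x : α) : HGraph α :=
  ⟨G.verts, insert (insert x (e.erase u)) (G.edges.erase e)⟩

/-- Move each edge of `S` from `u` to `x`. -/
def moveEdges [DecidableEq α] (G : HGraph α) (S : Finset (Finset α)) (u x : α) :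
    HGraph α :=
  ⟨G.verts, (G.edges \ S) ∪ S.image fun e => insert x (e.erase u)⟩

/-- Delete a set of edges (keeping all vertices). -/
def deleteEdges [DecidableEq α] (G : HGraph α) (S : Finset (Finset α)) : HGraph α :=
  ⟨G.verts, G.edges \ S⟩

open Classical in
/-- The vertex set of the component of `G` containing `u`. -/
noncomputable def component (G : HGraph α) (u : α) : Finset α :=
  G.verts.filter fun x => ∃ p, G.Walk u x p

/-- The component of `G` containing `u`, as a hypergraph. -/
noncomputable def componentHG [DecidableEq α] (G : HGraph α) (u : α) : HGraph α :=
  ⟨G.component u, G.edges.filter fun e => e ⊆ G.component u⟩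

/-- The `k`-uniform loose cycle with `m` edges `e_0, …, e_{m-1}`,
consecutive edges sharing exactly one vertex. -/
def looseCycle (m k : ℕ) : HGraph ℕ where
  verts := Finset.range (m * (k - 1))
  edges := (Finset.range m).image fun i =>
    (Finset.range k).image fun j => (i * (k - 1) + j) % (m * (k - 1))

/-- `C^k_2(t,s)`: two `k`-edges sharing exactly the two vertices `0,1`, with a hyperstar of
`t` edges attached at `0` and a hyperstar of `s` edges attached at `1`. -/
def Ck2 (k t s : ℕ) : HGraph ℕ where
  verts := Finset.range ((t + s + 2) * (k - 1))
  edges :=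
    {Finset.range k, insert 0 (insert 1 (Finset.Ico k (2 * k - 2)))} ∪
    ((Finset.range t).image fun i =>
      insert 0 (Finset.Ico (2 * k - 2 + i * (k - 1)) (2 * k - 2 + (i + 1) * (k - 1)))) ∪
    ((Finset.range s).image fun j =>
      insert 1 (Finset.Ico (2 * k - 2 + t * (k - 1) + j * (k - 1))
        (2 * k - 2 + t * (k - 1) + (j + 1) * (k - 1))))

/-- `C̃^k_2(p,q)`: the loose 2-cycle on the two `k`-edges `{0,…,k-1}` and
`{0,1} ∪ {k,…,2k-3}` (sharing exactly `0,1`), with a pendant path of length `p`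
attached at the degree-one vertex `2` of the first edge and a pendant path of length `q`
attached at the degree-one vertex `k` of the second edge. -/
def Ctilde (k p q : ℕ) : HGraph ℕ where
  verts := Finset.range ((p + q + 2) * (k - 1))
  edges :=
    {Finset.range k, insert 0 (insert 1 (Finset.Ico k (2 * k - 2)))} ∪
    ((Finset.range p).image fun i =>
      insert (if i = 0 then 2 else 2 * k - 2 + i * (k - 1) - 1)
        (Finset.Ico (2 * k - 2 + i * (k - 1)) (2 * k - 2 + (i + 1) * (k - 1)))) ∪
    ((Finset.range q).image fun j =>
      insert (if j = 0 then k else 2 * k - 2 + p * (k - 1) + j * (k - 1) - 1)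
        (Finset.Ico (2 * k - 2 + p * (k - 1) + j * (k - 1))
          (2 * k - 2 + p * (k - 1) + (j + 1) * (k - 1))))

/-- The triangle with one pendant edge, `C^2_3(1,0,0)`. -/
def triPendant : HGraph ℕ :=
  ⟨Finset.range 4, {{0, 1}, {1, 2}, {0, 2}, {0, 3}}⟩

/-- `G_{u,v}(p,q)`: attach a loose pendant path of `p` `k`-edges at `u` and a loose pendant
path of `q` `k`-edges at `v`, using fresh vertices (the `Sum.inr` side). -/
def attachTwoPathsAt [DecidableEq α] (k : ℕ) (G : HGraph α) (u v : α) (p q : ℕ) :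
    HGraph (α ⊕ ℕ) where
  verts := G.verts.image Sum.inl ∪ (Finset.range ((p + q) * (k - 1))).image Sum.inr
  edges :=
    G.edges.image (Finset.image Sum.inl) ∪
    ((Finset.range p).image fun i =>
      insert (if i = 0 then Sum.inl u else Sum.inr (i * (k - 1) - 1))
        ((Finset.Ico (i * (k - 1)) ((i + 1) * (k - 1))).image Sum.inr)) ∪
    ((Finset.range q).image fun j =>
      insert (if j = 0 then Sum.inl v else Sum.inr (p * (k - 1) + j * (k - 1) - 1))
        ((Finset.Ico (p * (k - 1) + j * (k - 1)) (p * (k - 1) + (j + 1) * (k - 1))).image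
          Sum.inr))

/-- `G_u(p,q)`: attach two loose pendant paths, of lengths `p` and `q`, at `u`. -/
def attachTwoPaths [DecidableEq α] (k : ℕ) (G : HGraph α) (u : α) (p q : ℕ) :
    HGraph (α ⊕ ℕ) :=
  attachTwoPathsAt k G u u p q

/-- `G_{e,s}(H_1,…,H_{k-1})`: given a pendant edge `e = {w 0, …, w (k-1)}` of `G` at
`w (k-1)`, identify the root `vr i` of `H i` with `w (k-1)` for (0-based) `i < s`, and with
`w i` for `i ≥ s`. -/
def Ges [DecidableEq α] (G : HGraph α) (k : ℕ) (hk : 2 ≤ k) (w : Fin k → α)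
    (H : Fin (k - 1) → HGraph α) (vr : Fin (k - 1) → α) (s : ℕ) : HGraph α :=
  unionHG G (unionMany fun i : Fin (k - 1) =>
    mapHG (Function.update id (vr i)
      (if (i : ℕ) < s then w ⟨k - 1, by omega⟩ else w (Fin.castLE (Nat.sub_le k 1) i))) (H i))

end HGraph

open HGraph

/-!
Write `u = v (k - 1)`, `x = v 1`, `G₀ = G - {e1, e2}`, and let `D` be the vertex set of
`H (k - 1)` without `u`. Every edge of `G` meeting `D` lies in `D ∪ {u}`: `D` is a branch
hanging at `u`. Moving the edges of `H (k - 1)` through `u` over to `x` re-hangs `D` at `x`;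
distances inside `D` and inside its complement `W` do not change, while for `a ∈ D`, `b ∈ W`
the distance `d(a, u) + d(u, b)` becomes `d(a, u) + d(x, b)`. Hence
`σ(G*) - σ(G) = |D| · ∑_{b ∈ W} (d(x, b) - d(u, b))`.

Since `e1, e2` form the only cycle, no path of `G₀` joins two vertices of `e1 ∪ e2` (it would
close a second cycle), so the components `H i` are pairwise disjoint, cover `V(G)`, and each hangs
at `v i`. Thus `d(x, b) - d(u, b) = d(x, v i) - d(u, v i)` for `b ∈ H i`, which is `-1` on
`H 1`, `+1` on `H i` for `i ≥ k` and at `u`, and `0` otherwise; by the hypothesis on the sizes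
the sum is positive.
-/

theorem Finset.sum_sum_eq_sdiff_of_symm {α M : Type*} [DecidableEq α] [AddCommMonoid M]
    {V D : Finset α} (hD : D ⊆ V) {f : α → α → M} (hf : ∀ a b, f a b = f b a) :
    ∑ a ∈ V, ∑ b ∈ V, f a b = ∑ a ∈ V \ D, ∑ b ∈ V \ D, f a b
      + 2 • ∑ a ∈ D, ∑ b ∈ V \ D, f a b + ∑ a ∈ D, ∑ b ∈ D, f a b := by
  have hsplit : ∀ a, ∑ b ∈ V, f a b = ∑ b ∈ V \ D, f a b + ∑ b ∈ D, f a b :=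
    fun a => (Finset.sum_sdiff hD).symm
  have hswap : ∑ a ∈ V \ D, ∑ b ∈ D, f a b = ∑ a ∈ D, ∑ b ∈ V \ D, f a b := by
    rw [Finset.sum_comm]; simp only [hf]
  rw [← Finset.sum_sdiff hD, Finset.sum_congr rfl fun a _ => hsplit a,
    Finset.sum_congr rfl fun a _ => hsplit a, Finset.sum_add_distrib, Finset.sum_add_distrib,
    hswap, two_nsmul]
  abel

namespace HGraph

variable {α : Type} {G G' : HGraph α} {a b c z : α} {p q : ℕ}

theorem Walk.append (h₁ : G.Walk a b p) (h₂ : G.Walk b c q) : G.Walk a c (p + q) := by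
  induction h₁ with
  | nil => simpa using h₂
  | cons v e he hu hv hne _ ih => rw [Nat.add_right_comm]; exact .cons v e he hu hv hne (ih h₂)

theorem Walk.single {e : Finset α} (he : e ∈ G.edges) (ha : a ∈ e) (hb : b ∈ e) (hab : a ≠ b) :
    G.Walk a b 1 :=
  .cons b e he ha hb hab (.nil b)

theorem Walk.reverse (h : G.Walk a b p) : G.Walk b a p := by
  induction h with
  | nil v => exact .nil v
  | cons v e he hu hv hne _ ih => exact ih.append (.single he hv hu hne.symm)

theorem Walk.mono (hsub : G.edges ⊆ G'.edges) (h : G.Walk a b p) : G'.Walk a b p := by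
  induction h with
  | nil v => exact .nil v
  | cons v e he hu hv hne _ ih => exact .cons v e (hsub he) hu hv hne ih

theorem Walk.eq_of_zero (h : G.Walk a b 0) : a = b := by
  cases h; rfl

theorem dist_le (h : G.Walk a b p) : G.dist a b ≤ p :=
  Nat.sInf_le h

theorem walk_dist (h : ∃ p, G.Walk a b p) : G.Walk a b (G.dist a b) :=
  Nat.sInf_mem h

theorem dist_comm (G : HGraph α) (a b : α) : G.dist a b = G.dist b a := by
  simp only [dist]
  congr 1
  ext p
  exact ⟨Walk.reverse, Walk.reverse⟩

@[simp]
theorem dist_self (G : HGraph α) (a : α) : G.dist a a = 0 :=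
  Nat.le_zero.mp (dist_le (.nil a))

theorem one_le_dist (h : ∃ p, G.Walk a b p) (hab : a ≠ b) : 1 ≤ G.dist a b :=
  Nat.one_le_iff_ne_zero.mpr fun h0 => hab (h0 ▸ walk_dist h).eq_of_zero

theorem dist_eq_one {e : Finset α} (he : e ∈ G.edges) (ha : a ∈ e) (hb : b ∈ e) (hab : a ≠ b) :
    G.dist a b = 1 :=
  le_antisymm (dist_le (.single he ha hb hab)) (one_le_dist ⟨1, .single he ha hb hab⟩ hab)

theorem exists_edge_of_dist_eq_one (h : G.dist a b = 1) (hw : ∃ p, G.Walk a b p) :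
    ∃ e ∈ G.edges, a ∈ e ∧ b ∈ e := by
  have hw1 := walk_dist hw
  rw [h] at hw1
  rcases hw1 with _ | ⟨_, e, he, ha, hb, _, hw⟩
  cases hw
  exact ⟨e, he, ha, hb⟩

def IsWeakHom (π : α → α) (G G' : HGraph α) : Prop :=
  ∀ e ∈ G.edges, (∃ e' ∈ G'.edges, ∀ w ∈ e, π w ∈ e') ∨ ∀ w ∈ e, ∀ w' ∈ e, π w = π w'

theorem Walk.map {π : α → α} (hπ : IsWeakHom π G G') (h : G.Walk a b p) :
    ∃ q ≤ p, G'.Walk (π a) (π b) q := by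
  induction h with
  | nil v => exact ⟨0, le_rfl, .nil _⟩
  | @cons u w v p e he hu hv _ _ ih =>
    obtain ⟨q, hq, hw'⟩ := ih
    by_cases huv : π u = π v
    · exact ⟨q, by omega, huv ▸ hw'⟩
    rcases hπ e he with ⟨e', he', hmem⟩ | hconst
    · exact ⟨q + 1, by omega, .cons _ e' he' (hmem u hu) (hmem v hv) huv hw'⟩
    · exact absurd (hconst u hu v hv) huv

theorem IsWeakHom.exists_walk {π : α → α} (hπ : IsWeakHom π G G') (h : ∃ p, G.Walk a b p) :
    ∃ q, G'.Walk (π a) (π b) q :=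
  let ⟨_, hw⟩ := h
  let ⟨q, _, hq⟩ := hw.map hπ
  ⟨q, hq⟩

theorem IsWeakHom.dist_le {π : α → α} (hπ : IsWeakHom π G G') (h : ∃ p, G.Walk a b p) :
    G'.dist (π a) (π b) ≤ G.dist a b :=
  let ⟨_, hq, hw⟩ := (walk_dist h).map hπ
  (HGraph.dist_le hw).trans hq

theorem IsWeakHom.dist_eq {π π' : α → α} (hπ : IsWeakHom π G G') (hπ' : IsWeakHom π' G' G)
    (ha : π' (π a) = a) (hb : π' (π b) = b) (h : ∃ p, G.Walk a b p) :
    G'.dist (π a) (π b) = G.dist a b :=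
  le_antisymm (hπ.dist_le h) (by simpa only [ha, hb] using hπ'.dist_le (hπ.exists_walk h))

def IsWalkSeq (G : HGraph α) (w : ℕ → α) (f : ℕ → Finset α) (p : ℕ) : Prop :=
  ∀ t < p, f t ∈ G.edges ∧ w t ∈ f t ∧ w (t + 1) ∈ f t ∧ w t ≠ w (t + 1)

theorem Walk.exists_isWalkSeq (h : G.Walk a b p) :
    ∃ w f, w 0 = a ∧ w p = b ∧ G.IsWalkSeq w f p := by
  induction h with
  | nil v => exact ⟨fun _ => v, fun _ => ∅, rfl, rfl, fun t ht => absurd ht (Nat.not_lt_zero t)⟩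
  | @cons u _ v p e he hu hv hne _ ih =>
    obtain ⟨w, f, hw0, hwp, hwf⟩ := ih
    refine ⟨fun t => t.casesOn u w, fun t => t.casesOn e f, rfl, hwp, fun t ht => ?_⟩
    rcases t with _ | t
    · exact ⟨he, hu, show w 0 ∈ e from hw0 ▸ hv, show u ≠ w 0 from hw0 ▸ hne⟩
    · exact hwf t (by omega)

theorem IsWalkSeq.walk {w : ℕ → α} {f : ℕ → Finset α} (h : G.IsWalkSeq w f p) {s t : ℕ}
    (hst : s ≤ t) (htp : t ≤ p) : G.Walk (w s) (w t) (t - s) := by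
  obtain ⟨n, rfl⟩ := Nat.exists_eq_add_of_le hst
  induction n generalizing s with
  | zero => simpa using Walk.nil (w s)
  | succ n ih =>
    obtain ⟨he, hs, hs', hne⟩ := h s (by omega)
    have := ih (s := s + 1) (by omega) (by omega)
    rw [show s + 1 + n - (s + 1) = n by omega] at this
    rw [show s + (n + 1) - s = n + 1 by omega]
    exact .cons _ _ he hs hs' hne (by rwa [show s + (n + 1) = s + 1 + n by omega])

theorem IsWalkSeq.mono {G' : HGraph α} {w : ℕ → α} {f : ℕ → Finset α} {p : ℕ}
    (h : G.IsWalkSeq w f p) (hsub : G.edges ⊆ G'.edges) : G'.IsWalkSeq w f p :=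
  fun t ht => ⟨hsub (h t ht).1, (h t ht).2⟩

/-- A shortest walk repeats neither vertices nor edges. -/
theorem exists_path_of_walk (h : ∃ p, G.Walk a b p) :
    ∃ w f, w 0 = a ∧ w (G.dist a b) = b ∧ G.IsWalkSeq w f (G.dist a b) ∧
      Set.InjOn w (Set.Iic (G.dist a b)) ∧ Set.InjOn f (Set.Iio (G.dist a b)) := by
  obtain ⟨w, f, hw0, hwq, hwf⟩ := (walk_dist h).exists_isWalkSeq
  have hmin : ∀ {n}, G.Walk a b n → G.dist a b ≤ n := dist_le
  generalize G.dist a b = q at hmin hwq hwf ⊢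
  have hpre : ∀ s ≤ q, G.Walk a (w s) s := fun s hs => by
    simpa [hw0] using hwf.walk (Nat.zero_le s) hs
  have hsuf : ∀ t ≤ q, G.Walk (w t) b (q - t) := fun t ht => by
    simpa [hwq] using hwf.walk ht le_rfl
  have hwinj : Set.InjOn w (Set.Iic q) := by
    have key : ∀ s t, s < t → t ≤ q → w s ≠ w t := fun s t hst htq heq => by
      have := hmin ((hpre s (by omega)).append (heq ▸ hsuf t htq))
      omega
    intro s hs t ht hst
    simp only [Set.mem_Iic] at hs ht
    by_contra hne
    rcases Nat.lt_or_gt_of_ne hne with hlt | hlt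
    exacts [key s t hlt ht hst, key t s hlt hs hst.symm]
  refine ⟨w, f, hw0, hwq, hwf, hwinj, ?_⟩
  have key : ∀ s t, s < t → t < q → f s ≠ f t := fun s t hst htq heq => by
    have hne : w s ≠ w (t + 1) := fun h => by
      have := hwinj (by simp only [Set.mem_Iic]; omega) (by simp only [Set.mem_Iic]; omega) h
      omega
    have hjump := Walk.single (hwf s (by omega)).1 (hwf s (by omega)).2.1
      (heq ▸ (hwf t htq).2.2.1) hne
    have := hmin (((hpre s (by omega)).append hjump).append (hsuf (t + 1) htq))
    omega
  intro s hs t ht hst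
  simp only [Set.mem_Iio] at hs ht
  by_contra hne
  rcases Nat.lt_or_gt_of_ne hne with hlt | hlt
  exacts [key s t hlt ht hst, key t s hlt hs hst.symm]

open Classical in
theorem mem_component : a ∈ G.component z ↔ a ∈ G.verts ∧ ∃ p, G.Walk z a p :=
  Finset.mem_filter

open Classical in
theorem component_subset_verts : G.component z ⊆ G.verts :=
  Finset.filter_subset _ _

theorem self_mem_component (hz : z ∈ G.verts) : z ∈ G.component z :=
  mem_component.mpr ⟨hz, 0, .nil z⟩

theorem subset_component_of_mem (hgood : G.Good) {e : Finset α} (he : e ∈ G.edges)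
    (ha : a ∈ e) (hz : a ∈ G.component z) : e ⊆ G.component z := by
  intro b hb
  obtain ⟨-, p, hp⟩ := mem_component.mp hz
  refine mem_component.mpr ⟨hgood e he hb, ?_⟩
  by_cases hab : a = b
  · exact ⟨p, hab ▸ hp⟩
  · exact ⟨p + 1, hp.append (.single he ha hb hab)⟩

section DecidableEq

variable [DecidableEq α] {D : Finset α}

theorem exists_cycle_of_path {g : Finset α} (hg : g ∈ G.edges) {q : ℕ} (hq : 1 ≤ q)
    {w : ℕ → α} {f : ℕ → Finset α} (hwf : G.IsWalkSeq w f q) (hfg : ∀ t < q, f t ≠ g)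
    (hw : Set.InjOn w (Set.Iic q)) (hf : Set.InjOn f (Set.Iio q)) (h0 : w 0 ∈ g)
    (hq' : w q ∈ g) : ∃ C : G.Cycle, ∀ t < q, f t ∈ C.edgeFinset := by
  obtain ⟨n, rfl⟩ : ∃ n, q = n + 1 := ⟨q - 1, by omega⟩
  have hlt : ∀ i : Fin (n + 2), i ≠ Fin.last (n + 1) → (i : ℕ) < n + 1 :=
    fun _ h => Fin.val_lt_last h
  let C : G.Cycle :=
    { n := n
      v := fun i => w i
      e := fun i => if i = Fin.last (n + 1) then g else f i
      he := fun i => by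
        split_ifs with h
        · exact hg
        · exact (hwf i (hlt i h)).1
      einj := fun i j hij => by
        dsimp only at hij
        split_ifs at hij with hi hj hj
        · exact hi.trans hj.symm
        · exact absurd hij.symm (hfg j (hlt j hj))
        · exact absurd hij (hfg i (hlt i hi))
        · exact Fin.ext (hf (Set.mem_Iio.mpr (hlt i hi)) (Set.mem_Iio.mpr (hlt j hj)) hij)
      vinj := fun i j hij => Fin.ext (hw (by simp; omega) (by simp; omega) hij)
      mem_fst := fun i => by
        split_ifs with h
        · rwa [h, Fin.val_last]
        · exact (hwf i (hlt i h)).2.1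
      mem_snd := fun i => by
        rw [Fin.val_add_one]
        split_ifs with h
        · exact h0
        · exact (hwf i (hlt i h)).2.2.1 }
  refine ⟨C, fun t ht =>
    Finset.mem_image.mpr ⟨(⟨t, by omega⟩ : Fin (n + 2)), Finset.mem_univ _, ?_⟩⟩
  have : (⟨t, by omega⟩ : Fin (n + 2)) ≠ Fin.last (n + 1) := fun h => by
    simp [Fin.ext_iff] at h; omega
  simp only [C, if_neg this]

theorem mem_of_walk_of_cycle_edges {Γ : HGraph α} {g h : Finset α} {a c : α}
    (hcyc : ∀ C : G.Cycle, C.edgeFinset = {g, h}) (hg : g ∈ G.edges)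
    (hΓ : Γ.edges ⊆ G.edges) (hgΓ : g ∉ Γ.edges) (ha : a ∈ g) (hc : c ∈ g) (hac : a ≠ c)
    (hw : ∃ p, Γ.Walk a c p) : h ∈ Γ.edges ∧ a ∈ h ∧ c ∈ h := by
  obtain ⟨w, f, hw0, hwq, hwf, hwinj, hfinj⟩ := exists_path_of_walk hw
  have hq := one_le_dist hw hac
  have hfΓ : ∀ t < Γ.dist a c, f t ∈ Γ.edges := fun t ht => (hwf t ht).1
  obtain ⟨C, hC⟩ := exists_cycle_of_path hg hq (hwf.mono hΓ)
    (fun t ht heq => hgΓ (heq ▸ hfΓ t ht)) hwinj hfinj (by rwa [hw0]) (by rwa [hwq])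
  have hfh : ∀ t < Γ.dist a c, f t = h := fun t ht => by
    have := hC t ht
    rw [hcyc C, Finset.mem_insert, Finset.mem_singleton] at this
    exact this.resolve_left fun heq => hgΓ (heq ▸ hfΓ t ht)
  have hq1 : Γ.dist a c = 1 := by
    by_contra hne
    have := hfinj (by simp; omega) (by simp; omega)
      ((hfh 0 (by omega)).trans (hfh 1 (by omega)).symm)
    omega
  obtain ⟨hf0, hw0f, hw1f, -⟩ := hwf 0 (by omega)
  rw [hfh 0 (by omega)] at hf0 hw0f hw1f
  rw [hq1] at hwq
  exact ⟨hf0, hw0 ▸ hw0f, hwq ▸ hw1f⟩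

def IsBranch (G : HGraph α) (c : α) (D : Finset α) : Prop :=
  ∀ e ∈ G.edges, e ⊆ insert c D ∨ Disjoint e D

theorem Walk.exists_split_of_isBranch (hD : G.IsBranch c D) (ha : a ∈ D) (hb : b ∉ D)
    (h : G.Walk a b p) : ∃ s t, s + t ≤ p ∧ G.Walk a c s ∧ G.Walk c b t := by
  induction h with
  | nil => exact absurd ha hb
  | @cons a b v p e he hu hv hne hw ih =>
    by_cases hvD : v ∈ D
    · obtain ⟨s, t, hst, hs, ht⟩ := ih hvD hb
      exact ⟨s + 1, t, by omega, .cons v e he hu hv hne hs, ht⟩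
    · have hvc : v = c := by
        rcases hD e he with hsub | hdisj
        · simpa [hvD] using hsub hv
        · exact absurd ha (Finset.disjoint_left.mp hdisj hu)
      subst hvc
      exact ⟨1, p, by omega, .single he hu hv hne, hw⟩

theorem dist_eq_add_of_isBranch (hD : G.IsBranch c D) (ha : a ∈ insert c D) (hb : b ∉ D)
    (h : ∃ p, G.Walk a b p) : G.dist a b = G.dist a c + G.dist c b := by
  rcases Finset.mem_insert.mp ha with rfl | ha
  · simp
  obtain ⟨s, t, hst, hs, ht⟩ := (walk_dist h).exists_split_of_isBranch hD ha hb
  refine le_antisymm (dist_le (walk_dist ⟨s, hs⟩ |>.append (walk_dist ⟨t, ht⟩))) ?_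
  exact (Nat.add_le_add (dist_le hs) (dist_le ht)).trans hst

section MoveBranch

variable {u x : α}

def moveBranch (G : HGraph α) (D : Finset α) (u x : α) : HGraph α :=
  G.moveEdges (G.edges.filter fun e => e ⊆ insert u D ∧ u ∈ e) u x

theorem mem_moveBranch_edges {e : Finset α} :
    e ∈ (G.moveBranch D u x).edges ↔ (e ∈ G.edges ∧ ¬(e ⊆ insert u D ∧ u ∈ e)) ∨
      ∃ f ∈ G.edges, (f ⊆ insert u D ∧ u ∈ f) ∧ insert x (f.erase u) = e := by
  simp only [moveBranch, moveEdges, Finset.mem_union, Finset.mem_sdiff, Finset.mem_filter,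
    Finset.mem_image]
  tauto

-- Collapsing `D` onto the root, or everything outside `D` onto the root, maps edges of `G` and
-- of the moved hypergraph into edges of the other one; this pins down all distances that do not
-- run between `D` and its complement.
theorem isWeakHom_collapse_moveBranch (hD : G.IsBranch u D) :
    IsWeakHom (fun w => if w ∈ D then u else w) G (G.moveBranch D u x) := by
  intro e he
  beta_reduce
  by_cases hsub : e ⊆ insert u D
  · have hcol : ∀ w ∈ e, (if w ∈ D then u else w) = u := fun _ hw => by
      split_ifs with h
      · rfl
      · exact (Finset.mem_insert.mp (hsub hw)).resolve_right h
    exact .inr fun w hw w' hw' => by rw [hcol w hw, hcol w' hw']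
  · have hdisj := (hD e he).resolve_left hsub
    refine .inl ⟨e, mem_moveBranch_edges.mpr (.inl ⟨he, fun h => hsub h.1⟩), fun w hw => ?_⟩
    rwa [if_neg (Finset.disjoint_left.mp hdisj hw)]

theorem isWeakHom_moveBranch_collapse (hD : G.IsBranch u D) :
    IsWeakHom (fun w => if w ∈ D then x else w) (G.moveBranch D u x) G := by
  intro e he
  beta_reduce
  suffices hcol : e ⊆ insert x D → ∀ w ∈ e, (if w ∈ D then x else w) = x by
    rcases mem_moveBranch_edges.mp he with ⟨he, hS⟩ | ⟨f, -, ⟨hf, -⟩, rfl⟩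
    · by_cases hsub : e ⊆ insert u D
      · have heD := (Finset.subset_insert_iff_of_notMem fun h => hS ⟨hsub, h⟩).mp hsub
        exact .inr fun w hw w' hw' => by
          rw [hcol (heD.trans (Finset.subset_insert x D)) w hw,
            hcol (heD.trans (Finset.subset_insert x D)) w' hw']
      · refine .inl ⟨e, he, fun w hw => ?_⟩
        rwa [if_neg (Finset.disjoint_left.mp ((hD e he).resolve_left hsub) hw)]
    · have hsub := Finset.insert_subset_insert x (Finset.subset_insert_iff.mp hf)
      exact .inr fun w hw w' hw' => by rw [hcol hsub w hw, hcol hsub w' hw']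
  intro hsub w hw
  split_ifs with h
  · rfl
  · exact (Finset.mem_insert.mp (hsub hw)).resolve_right h

theorem isWeakHom_retract_moveBranch (hD : G.IsBranch u D) (hu : u ∉ D) :
    IsWeakHom (fun w => if w ∈ D then w else x) G (G.moveBranch D u x) := by
  intro e he
  beta_reduce
  by_cases hS : e ⊆ insert u D ∧ u ∈ e
  · refine .inl ⟨insert x (e.erase u), mem_moveBranch_edges.mpr (.inr ⟨e, he, hS, rfl⟩),
      fun w hw => ?_⟩
    split_ifs with h
    · exact Finset.mem_insert_of_mem (Finset.mem_erase.mpr ⟨fun h' => hu (h' ▸ h), hw⟩)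
    · exact Finset.mem_insert_self x _
  by_cases hsub : e ⊆ insert u D
  · have heD := (Finset.subset_insert_iff_of_notMem fun h => hS ⟨hsub, h⟩).mp hsub
    refine .inl ⟨e, mem_moveBranch_edges.mpr (.inl ⟨he, hS⟩), fun w hw => ?_⟩
    rwa [if_pos (heD hw)]
  · have hdisj := (hD e he).resolve_left hsub
    refine .inr fun w hw w' hw' => ?_
    rw [if_neg (Finset.disjoint_left.mp hdisj hw), if_neg (Finset.disjoint_left.mp hdisj hw')]

theorem isWeakHom_moveBranch_retract (hD : G.IsBranch u D) (hx : x ∉ D) :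
    IsWeakHom (fun w => if w ∈ D then w else u) (G.moveBranch D u x) G := by
  intro e he
  beta_reduce
  rcases mem_moveBranch_edges.mp he with ⟨he, hS⟩ | ⟨f, hfG, ⟨hf, hfu⟩, rfl⟩
  · by_cases hsub : e ⊆ insert u D
    · have heD := (Finset.subset_insert_iff_of_notMem fun h => hS ⟨hsub, h⟩).mp hsub
      refine .inl ⟨e, he, fun w hw => ?_⟩
      rwa [if_pos (heD hw)]
    · have hdisj := (hD e he).resolve_left hsub
      refine .inr fun w hw w' hw' => ?_
      rw [if_neg (Finset.disjoint_left.mp hdisj hw), if_neg (Finset.disjoint_left.mp hdisj hw')]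
  · refine .inl ⟨f, hfG, fun w hw => ?_⟩
    rcases Finset.mem_insert.mp hw with rfl | hw
    · rwa [if_neg hx]
    · rw [if_pos (Finset.subset_insert_iff.mp hf hw)]
      exact Finset.mem_of_mem_erase hw

theorem isBranch_moveBranch (hD : G.IsBranch u D) : (G.moveBranch D u x).IsBranch x D := by
  intro e he
  rcases mem_moveBranch_edges.mp he with ⟨he, hS⟩ | ⟨f, -, ⟨hf, -⟩, rfl⟩
  · by_cases hsub : e ⊆ insert u D
    · exact .inl (((Finset.subset_insert_iff_of_notMem fun h => hS ⟨hsub, h⟩).mp hsub).trans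
        (Finset.subset_insert x D))
    · exact .inr ((hD e he).resolve_left hsub)
  · exact .inl (Finset.insert_subset_insert x (Finset.subset_insert_iff.mp hf))

theorem dist_moveBranch_of_notMem (hconn : G.Connected) (hD : G.IsBranch u D)
    (ha : a ∈ G.verts) (hb : b ∈ G.verts) (haD : a ∉ D) (hbD : b ∉ D) :
    (G.moveBranch D u x).dist a b = G.dist a b := by
  simpa [haD, hbD] using (isWeakHom_collapse_moveBranch hD).dist_eq
    (isWeakHom_moveBranch_collapse hD) (by simp [haD]) (by simp [hbD]) (hconn a ha b hb)

theorem dist_moveBranch_of_mem (hconn : G.Connected) (hD : G.IsBranch u D) (hDV : D ⊆ G.verts)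
    (hu : u ∉ D) (hx : x ∉ D) (ha : a ∈ D) (hb : b ∈ D) :
    (G.moveBranch D u x).dist a b = G.dist a b := by
  simpa [ha, hb] using (isWeakHom_retract_moveBranch (x := x) hD hu).dist_eq
    (isWeakHom_moveBranch_retract hD hx) (by simp [ha]) (by simp [hb])
    (hconn a (hDV ha) b (hDV hb))

theorem dist_moveBranch_root (hconn : G.Connected) (hD : G.IsBranch u D) (hDV : D ⊆ G.verts)
    (huV : u ∈ G.verts) (hu : u ∉ D) (hx : x ∉ D) (ha : a ∈ D) :
    (G.moveBranch D u x).dist a x = G.dist a u := by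
  simpa [ha, hu] using (isWeakHom_retract_moveBranch (x := x) hD hu).dist_eq
    (isWeakHom_moveBranch_retract hD hx) (by simp [ha]) (by simp [hu, hx])
    (hconn a (hDV ha) u huV)

theorem dist_moveBranch_of_mem_of_notMem (hconn : G.Connected) (hD : G.IsBranch u D)
    (hDV : D ⊆ G.verts) (huV : u ∈ G.verts) (hxV : x ∈ G.verts) (hu : u ∉ D) (hx : x ∉ D)
    (ha : a ∈ D) (hbV : b ∈ G.verts) (hb : b ∉ D) :
    (G.moveBranch D u x).dist a b = G.dist a u + G.dist x b := by
  have hax : ∃ p, (G.moveBranch D u x).Walk a x p := by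
    simpa [ha, hu] using (isWeakHom_retract_moveBranch hD hu).exists_walk
      (hconn a (hDV ha) u huV)
  have hxb : ∃ p, (G.moveBranch D u x).Walk x b p := by
    simpa [hx, hb] using (isWeakHom_collapse_moveBranch hD).exists_walk (hconn x hxV b hbV)
  obtain ⟨p, hp⟩ := hax
  obtain ⟨q, hq⟩ := hxb
  rw [dist_eq_add_of_isBranch (isBranch_moveBranch hD) (Finset.mem_insert_of_mem ha) hb
      ⟨p + q, hp.append hq⟩, dist_moveBranch_root hconn hD hDV huV hu hx ha,
    dist_moveBranch_of_notMem hconn hD hxV hbV hx hb]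

theorem sum_dist_moveBranch (hconn : G.Connected) (hD : G.IsBranch u D) (hDV : D ⊆ G.verts)
    (huV : u ∈ G.verts) (hxV : x ∈ G.verts) (hu : u ∉ D) (hx : x ∉ D) :
    ∑ a ∈ G.verts, ∑ b ∈ G.verts, (G.moveBranch D u x).dist a b
        + 2 * D.card * ∑ b ∈ G.verts \ D, G.dist u b =
      ∑ a ∈ G.verts, ∑ b ∈ G.verts, G.dist a b
        + 2 * D.card * ∑ b ∈ G.verts \ D, G.dist x b := by
  set G' := G.moveBranch D u x
  have hout : ∑ a ∈ G.verts \ D, ∑ b ∈ G.verts \ D, G'.dist a b =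
      ∑ a ∈ G.verts \ D, ∑ b ∈ G.verts \ D, G.dist a b := by
    refine Finset.sum_congr rfl fun a ha => Finset.sum_congr rfl fun b hb => ?_
    rw [Finset.mem_sdiff] at ha hb
    exact dist_moveBranch_of_notMem hconn hD ha.1 hb.1 ha.2 hb.2
  have hin : ∑ a ∈ D, ∑ b ∈ D, G'.dist a b = ∑ a ∈ D, ∑ b ∈ D, G.dist a b :=
    Finset.sum_congr rfl fun a ha => Finset.sum_congr rfl fun b hb =>
      dist_moveBranch_of_mem hconn hD hDV hu hx ha hb
  have hcross' : ∑ a ∈ D, ∑ b ∈ G.verts \ D, G'.dist a b =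
      ∑ a ∈ D, ∑ b ∈ G.verts \ D, (G.dist a u + G.dist x b) :=
    Finset.sum_congr rfl fun a ha => Finset.sum_congr rfl fun b hb =>
      dist_moveBranch_of_mem_of_notMem hconn hD hDV huV hxV hu hx ha (Finset.mem_sdiff.mp hb).1
        (Finset.mem_sdiff.mp hb).2
  have hcross : ∑ a ∈ D, ∑ b ∈ G.verts \ D, G.dist a b =
      ∑ a ∈ D, ∑ b ∈ G.verts \ D, (G.dist a u + G.dist u b) :=
    Finset.sum_congr rfl fun a ha => Finset.sum_congr rfl fun b hb =>
      dist_eq_add_of_isBranch hD (Finset.mem_insert_of_mem ha) (Finset.mem_sdiff.mp hb).2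
        (hconn a (hDV ha) b (Finset.mem_sdiff.mp hb).1)
  rw [Finset.sum_sum_eq_sdiff_of_symm hDV (dist_comm G'),
    Finset.sum_sum_eq_sdiff_of_symm hDV (dist_comm G), hout, hin, hcross, hcross']
  simp only [Finset.sum_add_distrib, Finset.sum_const, smul_eq_mul]
  ring

theorem trans_lt_trans_moveBranch (hconn : G.Connected) (hD : G.IsBranch u D)
    (hDV : D ⊆ G.verts) (huV : u ∈ G.verts) (hxV : x ∈ G.verts) (hu : u ∉ D) (hx : x ∉ D)
    (hDne : D.Nonempty)
    (hlt : ∑ b ∈ G.verts \ D, G.dist u b < ∑ b ∈ G.verts \ D, G.dist x b) :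
    G.trans < (G.moveBranch D u x).trans := by
  have hsum := sum_dist_moveBranch hconn hD hDV huV hxV hu hx
  have hgap : 2 * D.card * ∑ b ∈ G.verts \ D, G.dist u b + 2 ≤
      2 * D.card * ∑ b ∈ G.verts \ D, G.dist x b := by
    have := Nat.mul_le_mul_left (2 * D.card) hlt
    have := hDne.card_pos
    nlinarith
  simp only [trans, show (G.moveBranch D u x).verts = G.verts from rfl]
  omega

end MoveBranch

@[simp]
theorem mem_deleteEdges_edges {T : Finset (Finset α)} {e : Finset α} :
    e ∈ (G.deleteEdges T).edges ↔ e ∈ G.edges ∧ e ∉ T :=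
  Finset.mem_sdiff

theorem Good.deleteEdges (hgood : G.Good) (T : Finset (Finset α)) : (G.deleteEdges T).Good :=
  fun e he => hgood e (Finset.mem_sdiff.mp he).1

theorem deleteEdges_edges_subset (T : Finset (Finset α)) : (G.deleteEdges T).edges ⊆ G.edges :=
  Finset.sdiff_subset

theorem Walk.exists_mem_component_deleteEdges (hw : G.Walk a b p) (hgood : G.Good)
    {T : Finset (Finset α)} {S : Finset α} (hTS : ∀ e ∈ T, e ⊆ S)
    (ha : ∃ y ∈ S, a ∈ (G.deleteEdges T).component y) :
    ∃ y ∈ S, b ∈ (G.deleteEdges T).component y := by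
  induction hw with
  | nil => exact ha
  | @cons a b v p e he ha' hv hne _ ih =>
    apply ih
    by_cases heT : e ∈ T
    · exact ⟨v, hTS e heT hv, self_mem_component (hgood e he hv)⟩
    · obtain ⟨y, hy, hay⟩ := ha
      have he0 : e ∈ (G.deleteEdges T).edges := Finset.mem_sdiff.mpr ⟨he, heT⟩
      exact ⟨y, hy, subset_component_of_mem (hgood.deleteEdges _) he0 ha' hay hv⟩

structure TwoCycleAt (G : HGraph α) (e1 e2 : Finset α) (u : α) : Prop where
  left_mem : e1 ∈ G.edges
  right_mem : e2 ∈ G.edges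
  cycle_edges : ∀ C : G.Cycle, C.edgeFinset = {e1, e2}
  mem_left : u ∈ e1
  mem_right : u ∈ e2

namespace TwoCycleAt

variable {e1 e2 : Finset α} {u x y : α}

theorem not_walk_deleteEdges (hT : G.TwoCycleAt e1 e2 u) (ha : a ∈ e1 ∪ e2)
    (hb : b ∈ e1 ∪ e2) (hab : a ≠ b) (p : ℕ) : ¬(G.deleteEdges {e1, e2}).Walk a b p := by
  intro hw
  obtain ⟨hm1, hm2, hcyc, hu1, hu2⟩ := hT
  have hsub := deleteEdges_edges_subset (G := G) {e1, e2}
  have hnot : ∀ e ∈ ({e1, e2} : Finset (Finset α)), e ∉ (G.deleteEdges {e1, e2}).edges :=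
    fun e he he' => (mem_deleteEdges_edges.mp he').2 he
  have hcyc' : ∀ C : G.Cycle, C.edgeFinset = {e2, e1} := fun C => by
    rw [hcyc C, Finset.pair_comm]
  -- a walk from `e1 \ e2` to `e2 \ e1` continues along `e2` to `u`, closing a cycle with `e1`
  have hmixed : ∀ a b p, a ∈ e1 → a ∉ e2 → b ∈ e2 → b ∉ e1 →
      ¬(G.deleteEdges {e1, e2}).Walk a b p := fun a b p ha1 ha2 hb2 hb1 hw => by
    have hw' : (G.deleteEdges {e1}).Walk a u (p + 1) := by
      refine (hw.mono fun e he => ?_).append (.single ?_ hb2 hu2 fun h => hb1 (h ▸ hu1))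
      · simp only [mem_deleteEdges_edges, Finset.mem_insert, Finset.mem_singleton, not_or] at he ⊢
        exact ⟨he.1, he.2.1⟩
      · simp only [mem_deleteEdges_edges, Finset.mem_singleton]
        exact ⟨hm2, fun h => hb1 (h ▸ hb2)⟩
    exact ha2 (mem_of_walk_of_cycle_edges hcyc hm1 (deleteEdges_edges_subset _)
      (by simp) ha1 hu1 (fun h => ha2 (h ▸ hu2)) ⟨_, hw'⟩).2.1
  have hsame1 : a ∈ e1 → b ∈ e1 → False := fun ha1 hb1 => hnot e2 (by simp)
    (mem_of_walk_of_cycle_edges hcyc hm1 hsub (hnot e1 (by simp)) ha1 hb1 hab ⟨p, hw⟩).1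
  have hsame2 : a ∈ e2 → b ∈ e2 → False := fun ha2 hb2 => hnot e1 (by simp)
    (mem_of_walk_of_cycle_edges hcyc' hm2 hsub (hnot e2 (by simp)) ha2 hb2 hab ⟨p, hw⟩).1
  rcases Finset.mem_union.mp ha with ha1 | ha2 <;> rcases Finset.mem_union.mp hb with hb1 | hb2
  · exact hsame1 ha1 hb1
  · by_cases ha2 : a ∈ e2
    · exact hsame2 ha2 hb2
    by_cases hb1 : b ∈ e1
    · exact hsame1 ha1 hb1
    exact hmixed a b p ha1 ha2 hb2 hb1 hw
  · by_cases hb2 : b ∈ e2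
    · exact hsame2 ha2 hb2
    by_cases ha1 : a ∈ e1
    · exact hsame1 ha1 hb1
    exact hmixed b a p hb1 hb2 ha2 ha1 hw.reverse
  · exact hsame2 ha2 hb2

theorem eq_of_mem_component (hT : G.TwoCycleAt e1 e2 u) (hy : y ∈ e1 ∪ e2)
    (hz : z ∈ e1 ∪ e2) (h : z ∈ (G.deleteEdges {e1, e2}).component y) : z = y := by
  by_contra hne
  obtain ⟨-, p, hp⟩ := mem_component.mp h
  exact hT.not_walk_deleteEdges hy hz (Ne.symm hne) p hp

theorem mem_component_iff (hT : G.TwoCycleAt e1 e2 u) (hy : y ∈ e1 ∪ e2) (hz : z ∈ e1 ∪ e2)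
    (hb : b ∈ (G.deleteEdges {e1, e2}).component y) :
    b ∈ (G.deleteEdges {e1, e2}).component z ↔ z = y := by
  refine ⟨fun hbz => ?_, fun h => h ▸ hb⟩
  obtain ⟨-, p, hp⟩ := mem_component.mp hb
  obtain ⟨-, q, hq⟩ := mem_component.mp hbz
  by_contra hne
  exact hT.not_walk_deleteEdges hy hz (Ne.symm hne) _ (hp.append hq.reverse)

theorem mem_verts (hT : G.TwoCycleAt e1 e2 u) (hgood : G.Good) (hy : y ∈ e1 ∪ e2) :
    y ∈ G.verts := by
  rcases Finset.mem_union.mp hy with hy | hy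
  exacts [hgood e1 hT.left_mem hy, hgood e2 hT.right_mem hy]

theorem isBranch_component (hT : G.TwoCycleAt e1 e2 u) (hgood : G.Good) (hy : y ∈ e1 ∪ e2) :
    G.IsBranch y (((G.deleteEdges {e1, e2}).component y).erase y) := by
  intro e he
  by_cases hcyc : e = e1 ∨ e = e2
  · refine .inr (Finset.disjoint_left.mpr fun w hw hwD => (Finset.mem_erase.mp hwD).1 ?_)
    have hwE : w ∈ e1 ∪ e2 := by rcases hcyc with rfl | rfl <;> simp [hw]
    exact hT.eq_of_mem_component hy hwE (Finset.mem_of_mem_erase hwD)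
  by_cases hmeet : ∃ w ∈ e, w ∈ ((G.deleteEdges {e1, e2}).component y).erase y
  · obtain ⟨w, hw, hwD⟩ := hmeet
    have he0 : e ∈ (G.deleteEdges {e1, e2}).edges :=
      mem_deleteEdges_edges.mpr ⟨he, by simpa using hcyc⟩
    exact .inl ((subset_component_of_mem (hgood.deleteEdges _) he0 hw
      (Finset.mem_of_mem_erase hwD)).trans (Finset.insert_erase_subset y _))
  · push Not at hmeet
    exact .inr (Finset.disjoint_left.mpr hmeet)

theorem exists_mem_component (hT : G.TwoCycleAt e1 e2 u) (hgood : G.Good)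
    (hconn : G.Connected) (hb : b ∈ G.verts) :
    ∃ y ∈ e1 ∪ e2, b ∈ (G.deleteEdges {e1, e2}).component y := by
  have huV : u ∈ G.verts := hgood e1 hT.left_mem hT.mem_left
  obtain ⟨p, hp⟩ := hconn u huV b hb
  refine hp.exists_mem_component_deleteEdges hgood (fun e he => ?_)
    ⟨u, Finset.mem_union_left _ hT.mem_left, self_mem_component huV⟩
  rcases Finset.mem_insert.mp he with rfl | he
  · exact Finset.subset_union_left
  · exact Finset.mem_singleton.mp he ▸ Finset.subset_union_right

theorem dist_eq_dist_add_dist (hT : G.TwoCycleAt e1 e2 u) (hgood : G.Good)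
    (hconn : G.Connected) (hy : y ∈ e1 ∪ e2) (hz : z ∈ e1 ∪ e2)
    (hb : b ∈ (G.deleteEdges {e1, e2}).component y) : G.dist z b = G.dist z y + G.dist y b := by
  have hzD : z ∉ ((G.deleteEdges {e1, e2}).component y).erase y := fun h =>
    (Finset.mem_erase.mp h).1 (hT.eq_of_mem_component hy hz (Finset.mem_of_mem_erase h))
  have := dist_eq_add_of_isBranch (hT.isBranch_component hgood hy)
    (Finset.insert_erase_subset y _ hb) hzD
    (hconn b (component_subset_verts (G := G.deleteEdges _) hb) z (hT.mem_verts hgood hz))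
  rw [dist_comm G z b, this, dist_comm G b y, dist_comm G y z, add_comm]

theorem dist_eq_two (hT : G.TwoCycleAt e1 e2 u) (hx1 : x ∈ e1) (hx2 : x ∉ e2) (hy2 : y ∈ e2)
    (hy1 : y ∉ e1) : G.dist x y = 2 := by
  have hxu : x ≠ u := fun h => hx2 (h ▸ hT.mem_right)
  have huy : u ≠ y := fun h => hy1 (h ▸ hT.mem_left)
  have hxy : x ≠ y := fun h => hy1 (h ▸ hx1)
  have hwalk : G.Walk x y 2 := (Walk.single hT.left_mem hx1 hT.mem_left hxu).append
    (.single hT.right_mem hT.mem_right hy2 huy)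
  refine le_antisymm (dist_le hwalk) ?_
  by_contra hlt
  have h1 : G.dist x y = 1 := le_antisymm (by omega) (one_le_dist ⟨2, hwalk⟩ hxy)
  obtain ⟨e, he, hxe, hye⟩ := exists_edge_of_dist_eq_one h1 ⟨2, hwalk⟩
  have he0 : e ∈ (G.deleteEdges {e1, e2}).edges := by
    simp only [mem_deleteEdges_edges, Finset.mem_insert, Finset.mem_singleton, not_or]
    exact ⟨he, fun h => hy1 (h ▸ hye), fun h => hx2 (h ▸ hxe)⟩
  exact hT.not_walk_deleteEdges (Finset.mem_union_left _ hx1) (Finset.mem_union_right _ hy2)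
    hxy 1 (.single he0 hxe hye hxy)

theorem dist_add_ite_eq_of_mem (hT : G.TwoCycleAt e1 e2 u) (hx1 : x ∈ e1) (hx2 : x ∉ e2)
    (hy : y ∈ e1 ∪ e2) :
    G.dist x y + (if x = y then 1 else 0) =
      G.dist u y + (if y ∈ e2 \ e1 then 1 else 0) + (if u = y then 1 else 0) := by
  have hxu : x ≠ u := fun h => hx2 (h ▸ hT.mem_right)
  by_cases hxy : x = y
  · subst hxy
    simp [dist_eq_one hT.left_mem hT.mem_left hx1 hxu.symm, hx2, hxu.symm]
  by_cases huy : u = y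
  · subst huy
    simp [dist_eq_one hT.left_mem hx1 hT.mem_left hxu, hT.mem_left, hxu]
  by_cases hy1 : y ∈ e1
  · simp [dist_eq_one hT.left_mem hx1 hy1 hxy, dist_eq_one hT.left_mem hT.mem_left hy1 huy, hy1,
      hxy, huy]
  · have hy2 : y ∈ e2 := (Finset.mem_union.mp hy).resolve_left hy1
    simp [hT.dist_eq_two hx1 hx2 hy2 hy1, dist_eq_one hT.right_mem hT.mem_right hy2 huy, hy1, hy2,
      hxy, huy]

theorem dist_add_ite_eq (hT : G.TwoCycleAt e1 e2 u) (hgood : G.Good) (hconn : G.Connected)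
    (hx1 : x ∈ e1) (hx2 : x ∉ e2)
    (hb : b ∈ G.verts \ ((G.deleteEdges {e1, e2}).component u).erase u) :
    G.dist x b + (if b ∈ (G.deleteEdges {e1, e2}).component x then 1 else 0) =
      G.dist u b
        + (if b ∈ (e2 \ e1).biUnion (G.deleteEdges {e1, e2}).component then 1 else 0)
        + (if b = u then 1 else 0) := by
  obtain ⟨hbV, hbD⟩ := Finset.mem_sdiff.mp hb
  obtain ⟨y, hy, hby⟩ := hT.exists_mem_component hgood hconn hbV
  have hxE : x ∈ e1 ∪ e2 := Finset.mem_union_left _ hx1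
  have huE : u ∈ e1 ∪ e2 := Finset.mem_union_left _ hT.mem_left
  have hR : b ∈ (e2 \ e1).biUnion (G.deleteEdges {e1, e2}).component ↔ y ∈ e2 \ e1 := by
    simp only [Finset.mem_biUnion]
    refine ⟨fun ⟨z, hz, hbz⟩ => ?_, fun hy' => ⟨y, hy', hby⟩⟩
    rwa [← (hT.mem_component_iff hy (Finset.mem_union_right _ (Finset.mem_sdiff.mp hz).1)
      hby).mp hbz]
  have hbu : b = u ↔ u = y := by
    refine ⟨fun h => hT.eq_of_mem_component hy huE (by rwa [← h]), fun h => ?_⟩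
    subst h
    by_contra hne
    exact hbD (Finset.mem_erase.mpr ⟨hne, hby⟩)
  have := hT.dist_add_ite_eq_of_mem hx1 hx2 hy
  rw [hT.dist_eq_dist_add_dist hgood hconn hy hxE hby,
    hT.dist_eq_dist_add_dist hgood hconn hy huE hby]
  simp only [hT.mem_component_iff hy hxE hby, hR, hbu]
  omega

theorem component_subset_sdiff (hT : G.TwoCycleAt e1 e2 u) {y : α} (hy : y ∈ e1 ∪ e2)
    (hyu : y ≠ u) : (G.deleteEdges {e1, e2}).component y ⊆
      G.verts \ ((G.deleteEdges {e1, e2}).component u).erase u := fun _ hb =>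
  Finset.mem_sdiff.mpr ⟨component_subset_verts (G := G.deleteEdges _) hb, fun hbD =>
    hyu ((hT.mem_component_iff hy (Finset.mem_union_left _ hT.mem_left) hb).mp
      (Finset.mem_of_mem_erase hbD)).symm⟩

theorem sum_dist_lt_sum_dist (hT : G.TwoCycleAt e1 e2 u) (hgood : G.Good)
    (hconn : G.Connected) (hx1 : x ∈ e1) (hx2 : x ∉ e2)
    (hsum : ((G.deleteEdges {e1, e2}).component x).card ≤
      ∑ y ∈ e2 \ e1, ((G.deleteEdges {e1, e2}).component y).card) :
    ∑ b ∈ G.verts \ ((G.deleteEdges {e1, e2}).component u).erase u, G.dist u b <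
      ∑ b ∈ G.verts \ ((G.deleteEdges {e1, e2}).component u).erase u, G.dist x b := by
  have hpt := Finset.sum_congr rfl fun b hb => hT.dist_add_ite_eq hgood hconn hx1 hx2 hb
  simp only [Finset.sum_add_distrib, Finset.sum_ite_mem, Finset.sum_ite_eq', Finset.sum_const,
    smul_eq_mul, mul_one] at hpt
  have hxW := hT.component_subset_sdiff (Finset.mem_union_left _ hx1)
    fun h => hx2 (h ▸ hT.mem_right)
  have hRW : (e2 \ e1).biUnion (G.deleteEdges {e1, e2}).component ⊆
      G.verts \ ((G.deleteEdges {e1, e2}).component u).erase u :=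
    Finset.biUnion_subset.mpr fun y hy =>
      hT.component_subset_sdiff (Finset.mem_union_right _ (Finset.mem_sdiff.mp hy).1)
        fun h => (Finset.mem_sdiff.mp hy).2 (h ▸ hT.mem_left)
  have huW : u ∈ G.verts \ ((G.deleteEdges {e1, e2}).component u).erase u :=
    Finset.mem_sdiff.mpr
      ⟨hT.mem_verts hgood (Finset.mem_union_left _ hT.mem_left), Finset.notMem_erase u _⟩
  have hcardR : ((e2 \ e1).biUnion (G.deleteEdges {e1, e2}).component).card =
      ∑ y ∈ e2 \ e1, ((G.deleteEdges {e1, e2}).component y).card :=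
    Finset.card_biUnion fun y hy z hz hyz => Finset.disjoint_left.mpr fun b hby hbz =>
      hyz ((hT.mem_component_iff (Finset.mem_union_right _ (Finset.mem_sdiff.mp hz).1)
        (Finset.mem_union_right _ (Finset.mem_sdiff.mp hy).1) hbz).mp hby)
  rw [Finset.inter_eq_right.mpr hxW, Finset.inter_eq_right.mpr hRW, if_pos huW, hcardR] at hpt
  omega

theorem filter_componentHG_edges (hT : G.TwoCycleAt e1 e2 u) (hgood : G.Good)
    (h1 : ¬e1 ⊆ {u}) (h2 : ¬e2 ⊆ {u}) :
    ((G.deleteEdges {e1, e2}).componentHG u).edges.filter (u ∈ ·) =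
      G.edges.filter fun e => e ⊆ insert u (((G.deleteEdges {e1, e2}).component u).erase u) ∧
        u ∈ e := by
  have huE : u ∈ e1 ∪ e2 := Finset.mem_union_left _ hT.mem_left
  have hsub : ∀ e ∈ ({e1, e2} : Finset (Finset α)),
      ¬e ⊆ (G.deleteEdges {e1, e2}).component u := by
    intro e he hc
    simp only [Finset.mem_insert, Finset.mem_singleton] at he
    have hE : e ⊆ e1 ∪ e2 := by rcases he with rfl | rfl <;> simp
    have hu : e ⊆ {u} := fun w hw =>
      Finset.mem_singleton.mpr (hT.eq_of_mem_component huE (hE hw) (hc hw))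
    rcases he with rfl | rfl
    exacts [h1 hu, h2 hu]
  have huV : u ∈ G.verts := hT.mem_verts hgood huE
  rw [Finset.insert_erase (self_mem_component (G := G.deleteEdges {e1, e2}) huV)]
  ext e
  simp only [componentHG, Finset.mem_filter, mem_deleteEdges_edges]
  exact ⟨fun ⟨⟨⟨he, _⟩, hc⟩, hu⟩ => ⟨he, hc, hu⟩,
    fun ⟨he, hc, hu⟩ => ⟨⟨⟨he, fun h => hsub e h hc⟩, hc⟩, hu⟩⟩

theorem trans_lt_trans_moveBranch (hT : G.TwoCycleAt e1 e2 u) (hgood : G.Good)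
    (hconn : G.Connected) (hx1 : x ∈ e1) (hx2 : x ∉ e2)
    (hD : (((G.deleteEdges {e1, e2}).component u).erase u).Nonempty)
    (hsum : ((G.deleteEdges {e1, e2}).component x).card ≤
      ∑ y ∈ e2 \ e1, ((G.deleteEdges {e1, e2}).component y).card) :
    G.trans < (G.moveBranch (((G.deleteEdges {e1, e2}).component u).erase u) u x).trans := by
  have huE : u ∈ e1 ∪ e2 := Finset.mem_union_left _ hT.mem_left
  have hxE : x ∈ e1 ∪ e2 := Finset.mem_union_left _ hx1
  refine HGraph.trans_lt_trans_moveBranch hconn (hT.isBranch_component hgood huE)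
    ((Finset.erase_subset _ _).trans (component_subset_verts (G := G.deleteEdges _)))
    (hT.mem_verts hgood huE) (hT.mem_verts hgood hxE) (Finset.notMem_erase u _) (fun hxD => ?_)
    hD (hT.sum_dist_lt_sum_dist hgood hconn hx1 hx2 hsum)
  exact (Finset.mem_erase.mp hxD).1
    (hT.eq_of_mem_component huE hxE (Finset.mem_of_mem_erase hxD))

end TwoCycleAt

end DecidableEq

end HGraph

theorem insert_image_Ico_sdiff_image_range {α : Type} [DecidableEq α] {k : ℕ} (hk : 2 ≤ k)
    {v : ℕ → α} (hvinj : Set.InjOn v (Set.Iio (2 * (k - 1)))) :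
    insert (v 0) ((Finset.Ico (k - 1) (2 * k - 2)).image v) \ (Finset.range k).image v =
      (Finset.Ico k (2 * k - 2)).image v := by
  ext y
  simp only [Finset.mem_sdiff, Finset.mem_insert, Finset.mem_image, Finset.mem_Ico,
    Finset.mem_range]
  constructor
  · rintro ⟨rfl | ⟨i, hi, rfl⟩, hne⟩
    · exact absurd ⟨0, by omega, rfl⟩ hne
    · refine ⟨i, ⟨?_, hi.2⟩, rfl⟩
      by_contra hik
      exact hne ⟨i, by omega, rfl⟩
  · rintro ⟨i, hi, rfl⟩
    refine ⟨.inr ⟨i, ⟨by omega, hi.2⟩, rfl⟩, fun ⟨j, hj, hji⟩ => ?_⟩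
    have := hvinj (by simp; omega) (by simp; omega) hji
    omega

theorem stmt9_general {α : Type} [DecidableEq α] (k : ℕ) (hk : 3 ≤ k) (G : HGraph α)
    (hgood : G.Good) (hunif : G.Uniform k) (huni : G.Unicyclic)
    (v : ℕ → α) (hvinj : Set.InjOn v (Set.Iio (2 * (k - 1))))
    (e1 e2 : Finset α)
    (he1 : e1 = (Finset.range k).image v)
    (he2 : e2 = insert (v 0) ((Finset.Ico (k - 1) (2 * k - 2)).image v))
    (hm1 : e1 ∈ G.edges) (hm2 : e2 ∈ G.edges)
    (hcyc : ∀ C : G.Cycle, C.edgeFinset = {e1, e2})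
    (H : ℕ → HGraph α)
    (hH : ∀ i, H i = (G.deleteEdges {e1, e2}).componentHG (v i))
    (hsum : (H 1).verts.card ≤ ∑ i ∈ Finset.Ico k (2 * k - 2), (H i).verts.card)
    (hedge : (H (k - 1)).edges.Nonempty) :
    (G.moveEdges ((H (k - 1)).edges.filter fun f => v (k - 1) ∈ f)
        (v (k - 1)) (v 1)).trans > G.trans := by
  have hv : ∀ {i j}, i < 2 * k - 2 → j < 2 * k - 2 → v i = v j → i = j := fun hi hj h =>
    hvinj (by simp only [Set.mem_Iio]; omega) (by simp only [Set.mem_Iio]; omega) h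
  have hmem1 : ∀ i < k, v i ∈ e1 := fun i hi => he1 ▸ Finset.mem_image_of_mem v (by simpa)
  have hmem2 : ∀ i, k - 1 ≤ i → i < 2 * k - 2 → v i ∈ e2 := fun i hi hi' =>
    he2 ▸ Finset.mem_insert_of_mem (Finset.mem_image_of_mem v (by simp; omega))
  have hx1 : v 1 ∈ e1 := hmem1 1 (by omega)
  have hx2 : v 1 ∉ e2 := by
    rw [he2]
    simp only [Finset.mem_insert, Finset.mem_image, Finset.mem_Ico, not_or, not_exists]
    exact ⟨fun h => absurd (hv (by omega) (by omega) h) (by omega),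
      fun i hi => absurd (hv (by omega) (by omega) hi.2) (by omega)⟩
  have hT : G.TwoCycleAt e1 e2 (v (k - 1)) :=
    ⟨hm1, hm2, hcyc, hmem1 _ (by omega), hmem2 _ le_rfl (by omega)⟩
  have hS := hT.filter_componentHG_edges hgood
    (fun h => hx2 (Finset.mem_singleton.mp (h hx1) ▸ hT.mem_right))
    (fun h => absurd (hv (by omega) (by omega)
      (Finset.mem_singleton.mp (h (he2 ▸ Finset.mem_insert_self _ _)))) (by omega))
  obtain ⟨f, hf⟩ := hedge
  simp only [hH, componentHG, Finset.mem_filter, mem_deleteEdges_edges] at hf hsum hS ⊢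
  have hD : (((G.deleteEdges {e1, e2}).component (v (k - 1))).erase (v (k - 1))).Nonempty :=
    Finset.Nontrivial.erase_nonempty <| Set.Nontrivial.mono
      (Finset.one_lt_card_iff_nontrivial.mp (by rw [hunif f hf.1.1]; omega)) (by simpa using hf.2)
  rw [hS]
  refine hT.trans_lt_trans_moveBranch hgood huni.1 hx1 hx2 hD ?_
  rwa [he1, he2, insert_image_Ico_sdiff_image_range (by omega) hvinj,
    Finset.sum_image fun i hi j hj h => hv (by simp at hi; omega) (by simp at hj; omega) h,
    ← he1, ← he2]

/-- Lemma `cycle-max-moving2`: For `k ≥ 3`, let `G` be a `k`-uniform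
unicyclic hypergraph whose unique cycle has edges `e₁ = {v 0, …, v (k-1)}` and
`e₂ = {v (k-1), …, v (2k-3), v 0}` (0-based labels; paper: `v_1,…,v_{2k-1}` with
`v_{2k-1} = v_1`). Let `H i` be the component of `G - {e₁,e₂}` containing `v i`. If
`Σ_{i=k}^{2k-3} |V(H i)| ≥ |V(H 1)|` (paper: `Σ_{i=k+1}^{2(k-1)} |V(H_i)| ≥ |V(H_2)|`)
and `H (k-1)` (paper `H_k`) has at least one edge, then moving all edges of `H (k-1)`
containing `v (k-1)` from `v (k-1)` to `v 1` strictly increases the transmission. -/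
theorem stmt9 {α : Type} [DecidableEq α] (k : ℕ) (hk : 3 ≤ k) (G : HGraph α)
    (hgood : G.Good) (hunif : G.Uniform k) (huni : G.Unicyclic)
    (v : ℕ → α) (hvinj : Set.InjOn v (Set.Iio (2 * (k - 1))))
    (e1 e2 : Finset α)
    (he1 : e1 = (Finset.range k).image v)
    (he2 : e2 = insert (v 0) ((Finset.Ico (k - 1) (2 * k - 2)).image v))
    (hm1 : e1 ∈ G.edges) (hm2 : e2 ∈ G.edges) (hne : e1 ≠ e2)
    (hcyc : ∀ C : G.Cycle, C.edgeFinset = {e1, e2})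
    (H : ℕ → HGraph α)
    (hH : ∀ i, H i = (G.deleteEdges {e1, e2}).componentHG (v i))
    (hsum : (H 1).verts.card ≤ ∑ i ∈ Finset.Ico k (2 * k - 2), (H i).verts.card)
    (hedge : (H (k - 1)).edges.Nonempty) :
    (G.moveEdges ((H (k - 1)).edges.filter fun f => v (k - 1) ∈ f)
        (v (k - 1)) (v 1)).trans > G.trans :=
  stmt9_general k hk G hgood hunif huni v hvinj e1 e2 he1 he2 hm1 hm2 hcyc H hH hsum hedge
end

section
/- For k ≥ 3 and m ≥ 4, if 1 ≤ p ≤ q−2 and p+q = m−2, then σ(C̃^k_2(p+1, q−1)) − σ(C̃^k_2(p, q)) = (k−1)(q−p−1) > 0. -/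
open Finset

open FinHypergraph

/-!
List the edges of `C̃^k_2(p,q)` along the path `P_{p-1}, …, P_0, A, B, Q_0, …, Q_{q-1}`. Every
vertex lies on one edge or on two consecutive ones (the two vertices shared by `A` and `B` lie on
both), so distances are those of a loose path: if `x` lies on the edges numbered `lo x` to
`hi x`, then `d(x, y) = max(1, lo y + 1 - hi x, lo x + 1 - hi y)` for `x ≠ y`.

`C̃^k_2(p+1,q-1)` arises from `C̃^k_2(p,q)` by moving the `k - 1` vertices of `Q_0` other than its
root to a new edge at the far end of the `P`-path. Distances inside the cycle and `P`-path,
inside the moved block, and inside the rest of the `Q`-path do not change; distances between the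
first and the last of these parts drop by one; the change of a distance from a moved vertex is
read off from the layers. These changes add up to `2 (k-1) (q-p-1)`.
-/

namespace Nat

variable {w s t d e : ℕ}

theorem mul_add_lt_mul_iff (hs : s < w) : d * w + s < e * w ↔ d < e := by
  constructor
  · intro h
    by_contra! hle
    have := Nat.mul_le_mul_right w hle
    omega
  · intro h
    have := Nat.mul_le_mul_right w (Nat.succ_le_of_lt h)
    rw [Nat.succ_mul] at this
    omega

theorem mul_add_div_of_lt (hs : s < w) : (d * w + s) / w = d := by
  rw [add_comm, Nat.add_mul_div_right _ _ (by omega), Nat.div_eq_of_lt hs, zero_add]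

theorem mul_add_eq_mul_add_iff (hs : s < w) (ht : t < w) :
    d * w + s = e * w + t ↔ d = e ∧ s = t := by
  constructor
  · intro h
    exact ⟨by rw [← mul_add_div_of_lt (d := d) hs, h, mul_add_div_of_lt ht],
      by rw [← Nat.mul_add_mod_of_lt (a := d) hs, h, Nat.mul_add_mod_of_lt ht]⟩
  · rintro ⟨rfl, rfl⟩
    rfl

theorem mul_add_eq_mul_sub_one_iff (hs : s < w) (he : 0 < e) :
    d * w + s = e * w - 1 ↔ d + 1 = e ∧ s + 1 = w := by
  obtain ⟨e, rfl⟩ : ∃ e', e = e' + 1 := ⟨e - 1, by omega⟩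
  rw [show (e + 1) * w - 1 = e * w + (w - 1) by rw [Nat.succ_mul]; omega,
    mul_add_eq_mul_add_iff hs (by omega)]
  omega

theorem exists_mul_add_of_two_mul_le (hw : 0 < w) {x : ℕ} (hx : 2 * w ≤ x) :
    ∃ d s, 2 ≤ d ∧ s < w ∧ x = d * w + s :=
  ⟨x / w, x % w, (Nat.le_div_iff_mul_le hw).2 hx, Nat.mod_lt x hw, (Nat.div_add_mod' x w).symm⟩

end Nat

namespace Finset

theorem sum_range_add_add {M : Type*} [AddCommMonoid M] (f : ℕ → M) (a b c : ℕ) :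
    ∑ x ∈ range (a + b + c), f x =
      ∑ x ∈ range a, f x + ∑ x ∈ range b, f (a + x) + ∑ x ∈ range c, f (a + b + x) := by
  rw [sum_range_add, sum_range_add]

theorem sum_range_mul {M : Type*} [AddCommMonoid M] (f : ℕ → M) (n w : ℕ) :
    ∑ x ∈ range (n * w), f x = ∑ b ∈ range n, ∑ s ∈ range w, f (b * w + s) := by
  induction n with
  | zero => simp
  | succ n ih => rw [Nat.succ_mul, sum_range_add, ih, sum_range_succ]

end Finset

namespace FinHypergraph

variable {α : Type} {G : FinHypergraph α}

theorem Walk.single {e : Finset α} (he : e ∈ G.edges) {x y : α} (hx : x ∈ e) (hy : y ∈ e)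
    (hne : x ≠ y) : G.Walk x y 1 :=
  .cons y e he hx hy hne (.nil y)

/-- The edges of `G` can be listed as `E 0, …, E (m-1)` so that vertex `x` lies exactly in
`E (lo x), …, E (hi x)`, and this range has one or two elements: `G` is a loose path in which
consecutive edges may share several vertices. -/
structure IsIntervalLayout (G : FinHypergraph α) (m : ℕ) (lo hi : α → ℕ) : Prop where
  lo_le_hi : ∀ x, lo x ≤ hi x
  hi_le_lo_add_one : ∀ x, hi x ≤ lo x + 1
  hi_lt : ∀ x ∈ G.verts, hi x < m
  exists_index : ∀ e ∈ G.edges, ∃ i, ∀ x ∈ e, lo x ≤ i ∧ i ≤ hi x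
  exists_edge : ∀ i < m, ∃ e ∈ G.edges, ∀ x ∈ G.verts, lo x ≤ i → i ≤ hi x → x ∈ e
  exists_joint : ∀ i, i + 1 < m → ∃ z ∈ G.verts, lo z = i ∧ hi z = i + 1

variable [DecidableEq α]

def layoutDist (lo hi : α → ℕ) (x y : α) : ℕ :=
  if x = y then 0 else max 1 (max (lo y + 1 - hi x) (lo x + 1 - hi y))

theorem layoutDist_comm (lo hi : α → ℕ) (x y : α) :
    layoutDist lo hi x y = layoutDist lo hi y x := by
  by_cases h : x = y
  · simp [h]
  · simp only [layoutDist, if_neg h, if_neg (Ne.symm h)]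
    omega

namespace IsIntervalLayout

variable {m : ℕ} {lo hi : α → ℕ}

theorem layoutDist_le (hL : G.IsIntervalLayout m lo hi) {u v : α} {n : ℕ} (h : G.Walk u v n) :
    layoutDist lo hi u v ≤ n := by
  induction h with
  | nil => simp [layoutDist]
  | @cons u v x n e he hu hx _ _ ih =>
    obtain ⟨i, hmem⟩ := hL.exists_index e he
    have := hmem u hu
    have := hmem x hx
    have := hL.hi_le_lo_add_one x
    unfold layoutDist at ih ⊢
    rcases eq_or_ne x v with rfl | hxv
    · split_ifs <;> omega
    · split_ifs at ih ⊢ <;> omega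

theorem walk_layoutDist (hL : G.IsIntervalLayout m lo hi) {x y : α} (hx : x ∈ G.verts)
    (hy : y ∈ G.verts) : G.Walk x y (layoutDist lo hi x y) := by
  induction hn : layoutDist lo hi x y using Nat.strong_induction_on generalizing x with
  | _ n ih =>
  have hxy := hL.lo_le_hi x
  have hyx := hL.lo_le_hi y
  have hxm := hL.hi_lt x hx
  have hym := hL.hi_lt y hy
  by_cases heq : x = y
  · subst heq
    simp only [layoutDist] at hn
    exact hn ▸ .nil x
  have hn' : n = max 1 (max (lo y + 1 - hi x) (lo x + 1 - hi y)) := by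
    rw [← hn, layoutDist, if_neg heq]
  -- step to a joint vertex `z` of the edge `E i` through `x`, one layer closer to `y`
  have step : ∀ i z, z ∈ G.verts → i < m → lo x ≤ i → i ≤ hi x → lo z ≤ i → i ≤ hi z →
      z ≠ x → layoutDist lo hi z y + 1 = n → G.Walk x y n := by
    intro i z hz him hxi hix hzi hiz hzx hzn
    obtain ⟨e, he, hsub⟩ := hL.exists_edge i him
    have hw := ih _ (by omega) hz rfl
    exact hzn ▸ .cons z e he (hsub x hx hxi hix) (hsub z hz hzi hiz) (Ne.symm hzx) hw
  rcases lt_or_ge (hi x) (lo y) with hxy' | hxy'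
  · obtain ⟨z, hz, hlo, hhi⟩ := hL.exists_joint (hi x) (by omega)
    refine step (hi x) z hz (by omega) hxy le_rfl (by omega) (by omega) ?_ ?_
    · rintro rfl; omega
    · unfold layoutDist
      rw [if_neg (by rintro rfl; omega)]
      omega
  rcases lt_or_ge (hi y) (lo x) with hyx' | hyx'
  · obtain ⟨z, hz, hlo, hhi⟩ := hL.exists_joint (lo x - 1) (by omega)
    refine step (lo x) z hz (by omega) le_rfl hxy (by omega) (by omega) ?_ ?_
    · rintro rfl; omega
    · unfold layoutDist
      rw [if_neg (by rintro rfl; omega)]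
      omega
  obtain ⟨e, he, hsub⟩ := hL.exists_edge (max (lo x) (lo y)) (by omega)
  rw [hn', show max 1 (max (lo y + 1 - hi x) (lo x + 1 - hi y)) = 1 by omega]
  exact .single he (hsub x hx (by omega) (by omega)) (hsub y hy (by omega) (by omega)) heq

theorem dist_eq (hL : G.IsIntervalLayout m lo hi) {x y : α} (hx : x ∈ G.verts)
    (hy : y ∈ G.verts) : G.dist x y = layoutDist lo hi x y :=
  le_antisymm (Nat.sInf_le (hL.walk_layoutDist hx hy))
    (hL.layoutDist_le (Nat.sInf_mem ⟨_, hL.walk_layoutDist hx hy⟩))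

end IsIntervalLayout

/-- On `[0, a + w + n)`, the layout `(lo', hi')` arises from `(lo, hi)` by moving the block
`[a, a + w)`, which sits on layers `c, c + 1` between the head `[0, a)` (layers `≤ c`) and the
tail (layers `≥ c + 1`), to a new layer `0`. The head moves up one layer, except for a vertex on
layer `0` alone, which becomes the joint of layers `0` and `1`. -/
structure IsBlockMove (lo hi lo' hi' : ℕ → ℕ) (a w n c : ℕ) : Prop where
  head : ∀ y < a, lo y ≤ hi y ∧ hi y ≤ c ∧ hi' y = hi y + 1 ∧
    (lo' y = lo y + 1 ∨ lo' y = 0 ∧ hi y = 0)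
  block : ∀ s < w, lo' (a + s) = 0 ∧ hi' (a + s) = 0 ∧ lo (a + s) = c ∧
    c ≤ hi (a + s) ∧ hi (a + s) ≤ c + 1
  tail : ∀ t < n, lo' (a + w + t) = lo (a + w + t) ∧ hi' (a + w + t) = hi (a + w + t) ∧
    c + 1 ≤ lo (a + w + t) ∧ lo (a + w + t) ≤ hi (a + w + t)

theorem layoutDist_sub_layoutDist_comm (lo hi lo' hi' : ℕ → ℕ) (x y : ℕ) :
    (layoutDist lo' hi' x y : ℤ) - layoutDist lo hi x y =
      (layoutDist lo' hi' y x : ℤ) - layoutDist lo hi y x := by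
  rw [layoutDist_comm lo', layoutDist_comm lo]

namespace IsBlockMove

variable {lo hi lo' hi' : ℕ → ℕ} {a w n c : ℕ}

theorem layoutDist_sub_head_head (h : IsBlockMove lo hi lo' hi' a w n c) {x y : ℕ} (hx : x < a)
    (hy : y < a) :
    (layoutDist lo' hi' x y : ℤ) - layoutDist lo hi x y = 0 := by
  have := h.head x hx
  have := h.head y hy
  unfold layoutDist
  split_ifs <;> omega

theorem layoutDist_sub_head_block (h : IsBlockMove lo hi lo' hi' a w n c) {y s : ℕ} (hy : y < a)
    (hs : s < w) :
    (layoutDist lo' hi' y (a + s) : ℤ) - layoutDist lo hi y (a + s) = lo' y + hi y - c := by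
  have := h.head y hy
  have := h.block s hs
  simp only [layoutDist, if_neg (show y ≠ a + s by omega)]
  omega

theorem layoutDist_sub_head_tail (h : IsBlockMove lo hi lo' hi' a w n c) {y t : ℕ} (hy : y < a)
    (ht : t < n) :
    (layoutDist lo' hi' y (a + w + t) : ℤ) - layoutDist lo hi y (a + w + t) = -1 := by
  have := h.head y hy
  have := h.tail t ht
  simp only [layoutDist, if_neg (show y ≠ a + w + t by omega)]
  omega

theorem layoutDist_sub_block_block (h : IsBlockMove lo hi lo' hi' a w n c) {s s' : ℕ} (hs : s < w)
    (hs' : s' < w) :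
    (layoutDist lo' hi' (a + s) (a + s') : ℤ) - layoutDist lo hi (a + s) (a + s') = 0 := by
  have := h.block s hs
  have := h.block s' hs'
  unfold layoutDist
  split_ifs <;> omega

theorem layoutDist_sub_block_tail (h : IsBlockMove lo hi lo' hi' a w n c) {s t : ℕ} (hs : s < w)
    (ht : t < n) :
    (layoutDist lo' hi' (a + s) (a + w + t) : ℤ) - layoutDist lo hi (a + s) (a + w + t) =
      hi (a + s) := by
  have := h.block s hs
  have := h.tail t ht
  simp only [layoutDist, if_neg (show a + s ≠ a + w + t by omega)]
  omega

theorem layoutDist_sub_tail_tail (h : IsBlockMove lo hi lo' hi' a w n c) {t t' : ℕ} (ht : t < n)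
    (ht' : t' < n) :
    (layoutDist lo' hi' (a + w + t) (a + w + t') : ℤ) -
      layoutDist lo hi (a + w + t) (a + w + t') = 0 := by
  have := h.tail t ht
  have := h.tail t' ht'
  unfold layoutDist
  split_ifs <;> omega

theorem sum_row_head (h : IsBlockMove lo hi lo' hi' a w n c) {y : ℕ} (hy : y < a) :
    ∑ x ∈ range (a + w + n), ((layoutDist lo' hi' y x : ℤ) - layoutDist lo hi y x) =
      w * ((lo' y + hi y : ℤ) - c) - n := by
  rw [sum_range_add_add,
    sum_congr rfl fun x hx => h.layoutDist_sub_head_head hy (mem_range.1 hx),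
    sum_congr rfl fun s hs => h.layoutDist_sub_head_block hy (mem_range.1 hs),
    sum_congr rfl fun t ht => h.layoutDist_sub_head_tail hy (mem_range.1 ht)]
  simp only [sum_const_zero, sum_const, card_range, nsmul_eq_mul]
  ring

theorem sum_row_block (h : IsBlockMove lo hi lo' hi' a w n c) {s : ℕ} (hs : s < w) :
    ∑ x ∈ range (a + w + n),
        ((layoutDist lo' hi' (a + s) x : ℤ) - layoutDist lo hi (a + s) x) =
      ∑ y ∈ range a, ((lo' y + hi y : ℤ) - c) + n * hi (a + s) := by
  rw [sum_range_add_add,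
    sum_congr rfl fun y hy => (layoutDist_sub_layoutDist_comm lo hi lo' hi' (a + s) y).trans
      (h.layoutDist_sub_head_block (mem_range.1 hy) hs),
    sum_congr rfl fun s' hs' => h.layoutDist_sub_block_block hs (mem_range.1 hs'),
    sum_congr rfl fun t ht => h.layoutDist_sub_block_tail hs (mem_range.1 ht)]
  simp only [sum_const_zero, sum_const, card_range, nsmul_eq_mul]
  ring

theorem sum_row_tail (h : IsBlockMove lo hi lo' hi' a w n c) {t : ℕ} (ht : t < n) :
    ∑ x ∈ range (a + w + n),
        ((layoutDist lo' hi' (a + w + t) x : ℤ) - layoutDist lo hi (a + w + t) x) =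
      ∑ s ∈ range w, (hi (a + s) : ℤ) - a := by
  rw [sum_range_add_add,
    sum_congr rfl fun y hy => (layoutDist_sub_layoutDist_comm lo hi lo' hi' (a + w + t) y).trans
      (h.layoutDist_sub_head_tail (mem_range.1 hy) ht),
    sum_congr rfl fun s hs =>
      (layoutDist_sub_layoutDist_comm lo hi lo' hi' (a + w + t) (a + s)).trans
        (h.layoutDist_sub_block_tail (mem_range.1 hs) ht),
    sum_congr rfl fun t' ht' => h.layoutDist_sub_tail_tail ht (mem_range.1 ht')]
  simp only [sum_const_zero, sum_const, card_range, nsmul_eq_mul]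
  ring

theorem sum_sum_layoutDist_sub (h : IsBlockMove lo hi lo' hi' a w n c) :
    ∑ x ∈ range (a + w + n), ∑ y ∈ range (a + w + n),
        ((layoutDist lo' hi' x y : ℤ) - layoutDist lo hi x y) =
      2 * (w * ∑ y ∈ range a, ((lo' y + hi y : ℤ) - c) +
        n * ∑ s ∈ range w, (hi (a + s) : ℤ) - a * n) := by
  rw [sum_range_add_add,
    sum_congr rfl fun y hy => h.sum_row_head (mem_range.1 hy),
    sum_congr rfl fun s hs => h.sum_row_block (mem_range.1 hs),
    sum_congr rfl fun t ht => h.sum_row_tail (mem_range.1 ht)]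
  simp only [sum_sub_distrib, sum_add_distrib, sum_const, card_range, nsmul_eq_mul, ← mul_sum]
  ring

end IsBlockMove

end FinHypergraph

/-- The `i`-th edge of a loose path of `(w+1)`-edges hanging at the vertex `r`: it is attached
to `r` (if `i = 0`) or to the last vertex of the previous block, and its own vertices form the
block `[(d₀+i)w, (d₀+i+1)w)`. -/
def pendantEdge (w r d₀ i : ℕ) : Finset ℕ :=
  insert (if i = 0 then r else (d₀ + i) * w - 1) (Ico ((d₀ + i) * w) ((d₀ + i + 1) * w))

section PendantEdge

variable {w r d₀ i x s d : ℕ}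

theorem mem_pendantEdge_of_lt (hw : 0 < w) (hd₀ : 2 ≤ d₀) (hx : x < 2 * w) :
    x ∈ pendantEdge w r d₀ i ↔ i = 0 ∧ x = r := by
  have h₂ := Nat.mul_le_mul_right w (show 2 ≤ d₀ + i by omega)
  have h₃ : i ≠ 0 → 3 * w ≤ (d₀ + i) * w := fun hi => Nat.mul_le_mul_right w (by omega)
  simp only [pendantEdge, mem_insert, mem_Ico]
  split_ifs with hi
  · omega
  · have := h₃ hi
    omega

theorem mul_add_mem_pendantEdge_iff (hs : s < w) (hr : r ≠ d * w + s) :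
    d * w + s ∈ pendantEdge w r d₀ i ↔
      (0 < i ∧ d + 1 = d₀ + i ∧ s + 1 = w) ∨ d = d₀ + i := by
  have hblock :
      (d₀ + i) * w ≤ d * w + s ∧ d * w + s < (d₀ + i + 1) * w ↔ d = d₀ + i := by
    rw [Nat.mul_add_lt_mul_iff hs, ← not_lt, Nat.mul_add_lt_mul_iff hs]
    omega
  simp only [pendantEdge, mem_insert, mem_Ico, hblock]
  split_ifs with hi
  · have := Ne.symm hr
    simp only [this, false_or]
    omega
  · rw [Nat.mul_add_eq_mul_sub_one_iff hs (by omega)]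
    omega

end PendantEdge

/-- The edges of `C̃^{w+1}_2(p,q)` in path order `P_{p-1}, …, P_0, A, B, Q_0, …, Q_{q-1}`. -/
def ctildeEdge (w p t : ℕ) : Finset ℕ :=
  if t < p then pendantEdge w 2 2 (p - 1 - t)
  else if t = p then range (w + 1)
  else if t = p + 1 then insert 0 (insert 1 (Ico (w + 1) (2 * w)))
  else pendantEdge w (w + 1) (p + 2) (t - p - 2)

/-- `ctildeLo w p x` and `ctildeHi w p q x` are the first and the last edge through `x` in the
order of `ctildeEdge`. The vertices below `2w` are those of `A = [0, w]` and
`B = {0, 1} ∪ [w + 1, 2w)`; from `2w` on, vertex `d * w + s` (`s < w`) lies in the block of the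
`(d - 2)`-th path edge, and for `s = w - 1` it is also the root of the next edge of its path. -/
def ctildeLo (w p x : ℕ) : ℕ :=
  if x < 2 * w then (if x = 2 then p - 1 else if x ≤ w then p else p + 1)
  else if x / w ≤ p + 1 then p + 1 - x / w - (if x % w + 1 = w ∧ x / w ≤ p then 1 else 0)
  else x / w

def ctildeHi (w p q x : ℕ) : ℕ :=
  if x < 2 * w then
    (if x < 2 then p + 1 else if x ≤ w then p else if x = w + 1 then p + 2 else p + 1)
  else if x / w ≤ p + 1 then p + 1 - x / w
  else x / w + (if x % w + 1 = w ∧ x / w < p + q + 1 then 1 else 0)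

section CtildeLayout

variable {w p q d s x : ℕ}

theorem ctildeLo_of_lt (hx : x < 2 * w) :
    ctildeLo w p x = if x = 2 then p - 1 else if x ≤ w then p else p + 1 := if_pos hx

theorem ctildeHi_of_lt (hx : x < 2 * w) : ctildeHi w p q x =
    if x < 2 then p + 1 else if x ≤ w then p else if x = w + 1 then p + 2 else p + 1 := if_pos hx

theorem ctildeLo_mul_add (hd : 2 ≤ d) (hs : s < w) :
    ctildeLo w p (d * w + s) =
      if d ≤ p + 1 then p + 1 - d - (if s + 1 = w ∧ d ≤ p then 1 else 0) else d := by
  have : ¬ d * w + s < 2 * w := by rw [Nat.mul_add_lt_mul_iff hs]; omega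
  simp only [ctildeLo, if_neg this, Nat.mul_add_div_of_lt hs, Nat.mul_add_mod_of_lt hs]

theorem ctildeHi_mul_add (hd : 2 ≤ d) (hs : s < w) :
    ctildeHi w p q (d * w + s) =
      if d ≤ p + 1 then p + 1 - d else d + (if s + 1 = w ∧ d < p + q + 1 then 1 else 0) := by
  have : ¬ d * w + s < 2 * w := by rw [Nat.mul_add_lt_mul_iff hs]; omega
  simp only [ctildeHi, if_neg this, Nat.mul_add_div_of_lt hs, Nat.mul_add_mod_of_lt hs]

theorem ctildeLo_le_ctildeHi (x : ℕ) : ctildeLo w p x ≤ ctildeHi w p q x := by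
  unfold ctildeLo ctildeHi
  split_ifs <;> omega

theorem ctildeHi_le_ctildeLo_add_one (hw : 2 ≤ w) (x : ℕ) :
    ctildeHi w p q x ≤ ctildeLo w p x + 1 := by
  unfold ctildeLo ctildeHi
  split_ifs <;> omega

theorem mem_ctildeEdge_of_lt (hw : 2 ≤ w) {t : ℕ} (hx : x < 2 * w) :
    x ∈ ctildeEdge w p t ↔ (t + 1 = p ∧ x = 2) ∨ (t = p ∧ x ≤ w) ∨
      (t = p + 1 ∧ (x < 2 ∨ w + 1 ≤ x)) ∨ (t = p + 2 ∧ x = w + 1) := by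
  unfold ctildeEdge
  split_ifs
  · rw [mem_pendantEdge_of_lt (by omega) le_rfl hx]; omega
  · rw [mem_range]; omega
  · simp only [mem_insert, mem_Ico]; omega
  · rw [mem_pendantEdge_of_lt (by omega) (by omega) hx]; omega

theorem mul_add_mem_ctildeEdge_iff (hw : 2 ≤ w) (hd : 2 ≤ d) (hs : s < w) {t : ℕ} :
    d * w + s ∈ ctildeEdge w p t ↔
      (t + 1 < p ∧ d + t = p ∧ s + 1 = w) ∨ (t < p ∧ d + t = p + 1) ∨
      (p + 2 < t ∧ d = t - 1 ∧ s + 1 = w) ∨ (p + 2 ≤ t ∧ d = t) := by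
  have h2w : 2 * w ≤ d * w := Nat.mul_le_mul_right w hd
  unfold ctildeEdge
  split_ifs
  · rw [mul_add_mem_pendantEdge_iff (r := 2) (d := d) hs (by omega)]; omega
  · rw [mem_range]; omega
  · simp only [mem_insert, mem_Ico]; omega
  · rw [mul_add_mem_pendantEdge_iff (r := w + 1) (d := d) hs (by omega)]; omega

theorem mem_ctildeEdge_iff (hw : 2 ≤ w) (hq : 1 ≤ q) {t : ℕ} (ht : t < p + q + 2) :
    x ∈ ctildeEdge w p t ↔
      x < (p + q + 2) * w ∧ ctildeLo w p x ≤ t ∧ t ≤ ctildeHi w p q x := by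
  rcases lt_or_ge x (2 * w) with hx | hx
  · have hN : x < (p + q + 2) * w :=
      lt_of_lt_of_le hx (Nat.mul_le_mul_right w (by omega))
    simp only [mem_ctildeEdge_of_lt hw hx, ctildeLo_of_lt hx, ctildeHi_of_lt hx, hN, true_and]
    split_ifs <;> omega
  · obtain ⟨d, s, hd, hs, rfl⟩ := Nat.exists_mul_add_of_two_mul_le (by omega) hx
    rw [mul_add_mem_ctildeEdge_iff hw hd hs, ctildeLo_mul_add hd hs, ctildeHi_mul_add hd hs,
      Nat.mul_add_lt_mul_iff hs]
    split_ifs <;> omega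

theorem Ctilde_verts : (Ctilde (w + 1) p q).verts = range ((p + q + 2) * w) := by
  simp [Ctilde]

theorem Ctilde_edges : (Ctilde (w + 1) p q).edges =
    {range (w + 1), insert 0 (insert 1 (Ico (w + 1) (2 * w)))} ∪
      (range p).image (pendantEdge w 2 2) ∪ (range q).image (pendantEdge w (w + 1) (p + 2)) := by
  have h : 2 * (w + 1) - 2 = 2 * w := by omega
  simp only [Ctilde, Nat.add_sub_cancel, h]
  congr 3 <;> funext i <;> simp only [pendantEdge] <;> ring_nf

theorem mem_Ctilde_edges {e : Finset ℕ} :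
    e ∈ (Ctilde (w + 1) p q).edges ↔ ∃ t < p + q + 2, ctildeEdge w p t = e := by
  simp only [Ctilde_edges, mem_union, mem_insert, mem_singleton, mem_image, mem_range]
  constructor
  · rintro (((rfl | rfl) | ⟨i, hi, rfl⟩) | ⟨j, hj, rfl⟩)
    · exact ⟨p, by omega, by simp [ctildeEdge]⟩
    · exact ⟨p + 1, by omega, by simp [ctildeEdge]⟩
    · exact ⟨p - 1 - i, by omega, by simp only [ctildeEdge, if_pos (show p - 1 - i < p by omega),
        show p - 1 - (p - 1 - i) = i by omega]⟩
    · exact ⟨p + 2 + j, by omega, by simp only [ctildeEdge, show p + 2 + j - p - 2 = j by omega,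
        if_neg (show ¬ p + 2 + j < p by omega), if_neg (show p + 2 + j ≠ p by omega),
        if_neg (show p + 2 + j ≠ p + 1 by omega)]⟩
  · rintro ⟨t, ht, rfl⟩
    unfold ctildeEdge
    split_ifs
    · exact Or.inl (Or.inr ⟨p - 1 - t, by omega, rfl⟩)
    · exact Or.inl (Or.inl (Or.inl rfl))
    · exact Or.inl (Or.inl (Or.inr rfl))
    · exact Or.inr ⟨t - p - 2, by omega, rfl⟩

theorem ctildeHi_lt (hq : 1 ≤ q) (hx : x < (p + q + 2) * w) : ctildeHi w p q x < p + q + 2 := by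
  have hw : 0 < w := Nat.pos_of_ne_zero (by rintro rfl; simp at hx)
  rcases lt_or_ge x (2 * w) with hx' | hx'
  · rw [ctildeHi_of_lt hx']
    split_ifs <;> omega
  · obtain ⟨d, s, hd, hs, rfl⟩ := Nat.exists_mul_add_of_two_mul_le hw hx'
    rw [Nat.mul_add_lt_mul_iff hs] at hx
    rw [ctildeHi_mul_add hd hs]
    split_ifs <;> omega

theorem exists_ctildeJoint (hw : 2 ≤ w) {i : ℕ} (hi : i + 1 < p + q + 2) :
    ∃ z < (p + q + 2) * w, ctildeLo w p z = i ∧ ctildeHi w p q z = i + 1 := by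
  have h2w : 2 * w ≤ (p + q + 2) * w := Nat.mul_le_mul_right w (by omega)
  have cycle : ∀ z < 2 * w, (z = 2 ∧ i + 1 = p) ∨ (z = 0 ∧ i = p) ∨ (z = w + 1 ∧ i = p + 1) →
      ctildeLo w p z = i ∧ ctildeHi w p q z = i + 1 := by
    intro z hz h
    rw [ctildeLo_of_lt hz, ctildeHi_of_lt hz]
    split_ifs <;> omega
  have block : ∀ d, 2 ≤ d → d + i = p ∨ p + 2 ≤ d ∧ d = i →
      ctildeLo w p (d * w + (w - 1)) = i ∧ ctildeHi w p q (d * w + (w - 1)) = i + 1 := by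
    intro d hd h
    rw [ctildeLo_mul_add hd (by omega), ctildeHi_mul_add hd (by omega)]
    split_ifs <;> omega
  rcases (show i + 2 ≤ p ∨ i + 1 = p ∨ i = p ∨ i = p + 1 ∨ p + 2 ≤ i by omega) with
    h | h | h | h | h
  · exact ⟨(p - i) * w + (w - 1), (Nat.mul_add_lt_mul_iff (by omega)).2 (by omega),
      block (p - i) (by omega) (by omega)⟩
  · exact ⟨2, by omega, cycle 2 (by omega) (by omega)⟩
  · exact ⟨0, by omega, cycle 0 (by omega) (by omega)⟩
  · exact ⟨w + 1, by omega, cycle (w + 1) (by omega) (by omega)⟩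
  · exact ⟨i * w + (w - 1), (Nat.mul_add_lt_mul_iff (by omega)).2 (by omega),
      block i (by omega) (by omega)⟩

theorem isIntervalLayout_Ctilde (hw : 2 ≤ w) (hq : 1 ≤ q) :
    (Ctilde (w + 1) p q).IsIntervalLayout (p + q + 2) (ctildeLo w p) (ctildeHi w p q) where
  lo_le_hi := ctildeLo_le_ctildeHi
  hi_le_lo_add_one := ctildeHi_le_ctildeLo_add_one hw
  hi_lt x hx := ctildeHi_lt hq (by rwa [Ctilde_verts, mem_range] at hx)
  exists_index e he := by
    obtain ⟨t, ht, rfl⟩ := mem_Ctilde_edges.1 he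
    exact ⟨t, fun x hx => ((mem_ctildeEdge_iff hw hq ht).1 hx).2⟩
  exists_edge t ht := ⟨ctildeEdge w p t, mem_Ctilde_edges.2 ⟨t, ht, rfl⟩, fun x hx hlo hhi =>
    (mem_ctildeEdge_iff hw hq ht).2 ⟨by rwa [Ctilde_verts, mem_range] at hx, hlo, hhi⟩⟩
  exists_joint i hi := by
    obtain ⟨z, hz, hlo, hhi⟩ := exists_ctildeJoint hw hi
    exact ⟨z, by rwa [Ctilde_verts, mem_range], hlo, hhi⟩

end CtildeLayout

section CtildeMove

variable {w p q : ℕ}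

theorem isBlockMove_Ctilde (hw : 2 ≤ w) (hp : 1 ≤ p) (hq : 2 ≤ q) :
    IsBlockMove (ctildeLo w p) (ctildeHi w p q) (ctildeLo w (p + 1)) (ctildeHi w (p + 1) (q - 1))
      ((p + 2) * w) w ((q - 1) * w) (p + 2) where
  head y hy := by
    rcases lt_or_ge y (2 * w) with hy' | hy'
    · rw [ctildeLo_of_lt hy', ctildeLo_of_lt hy', ctildeHi_of_lt hy', ctildeHi_of_lt hy']
      split_ifs <;> omega
    · obtain ⟨d, s, hd, hs, rfl⟩ := Nat.exists_mul_add_of_two_mul_le (by omega) hy'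
      rw [Nat.mul_add_lt_mul_iff hs] at hy
      rw [ctildeLo_mul_add hd hs, ctildeLo_mul_add hd hs, ctildeHi_mul_add hd hs,
        ctildeHi_mul_add hd hs]
      split_ifs <;> omega
  block s hs := by
    rw [ctildeLo_mul_add (by omega) hs, ctildeLo_mul_add (by omega) hs,
      ctildeHi_mul_add (by omega) hs, ctildeHi_mul_add (by omega) hs]
    split_ifs <;> omega
  tail t ht := by
    have hge : (p + 3) * w ≤ (p + 2) * w + w + t := by
      have : (p + 3) * w = (p + 2) * w + w := by ring
      omega
    obtain ⟨d, s, hd, hs, hx⟩ := Nat.exists_mul_add_of_two_mul_le (by omega)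
      (le_trans (Nat.mul_le_mul_right w (by omega : 2 ≤ p + 3)) hge)
    rw [hx] at hge ⊢
    rw [← not_lt, Nat.mul_add_lt_mul_iff hs] at hge
    rw [ctildeLo_mul_add hd hs, ctildeLo_mul_add hd hs, ctildeHi_mul_add hd hs,
      ctildeHi_mul_add hd hs]
    split_ifs <;> omega

theorem sum_range_two_mul_ctildeLo_add_ctildeHi (hw : 2 ≤ w) (hp : 1 ≤ p) :
    ∑ y ∈ range (2 * w), ((ctildeLo w (p + 1) y + ctildeHi w p q y : ℤ) - (p + 2)) =
      2 * p * w := by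
  -- the cycle vertices `2 + t` of `A` and `w + 1 + t` of `B` compensate each other
  have hpair : ∀ t ∈ range (w - 1),
      ((ctildeLo w (p + 1) (2 + t) + ctildeHi w p q (2 + t) : ℤ) - (p + 2)) +
        ((ctildeLo w (p + 1) (2 + (w - 1) + t) + ctildeHi w p q (2 + (w - 1) + t) : ℤ) -
          (p + 2)) = 2 * p := by
    intro t ht
    rw [mem_range] at ht
    rw [ctildeLo_of_lt (by omega), ctildeLo_of_lt (by omega), ctildeHi_of_lt (by omega),
      ctildeHi_of_lt (by omega)]
    split_ifs <;> omega
  have hAB : ∀ y ∈ range 2, (ctildeLo w (p + 1) y + ctildeHi w p q y : ℤ) - (p + 2) = p := by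
    intro y hy
    rw [mem_range] at hy
    rw [ctildeLo_of_lt (by omega), ctildeHi_of_lt (by omega)]
    split_ifs <;> omega
  rw [show 2 * w = 2 + (w - 1) + (w - 1) by omega, sum_range_add_add, add_assoc,
    ← sum_add_distrib, sum_congr rfl hpair, sum_congr rfl hAB]
  simp only [sum_const, card_range, nsmul_eq_mul]
  push_cast [Nat.cast_sub (show 1 ≤ w by omega)]
  ring

theorem sum_range_ctildeLo_add_ctildeHi (hw : 2 ≤ w) (hp : 1 ≤ p) :
    ∑ y ∈ range ((p + 2) * w), ((ctildeLo w (p + 1) y + ctildeHi w p q y : ℤ) - (p + 2)) =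
      -p := by
  have hblock : ∀ b ∈ range p, ∑ s ∈ range w,
      ((ctildeLo w (p + 1) (2 * w + (b * w + s)) + ctildeHi w p q (2 * w + (b * w + s)) : ℤ) -
        (p + 2)) = w * ((p : ℤ) - 3 - 2 * b) - 1 := by
    intro b hb
    rw [mem_range] at hb
    have hval : ∀ s ∈ range w,
        ((ctildeLo w (p + 1) (2 * w + (b * w + s)) + ctildeHi w p q (2 * w + (b * w + s)) : ℤ) -
          (p + 2)) = ((p : ℤ) - 3 - 2 * b) - if s = w - 1 then 1 else 0 := by
      intro s hs
      rw [mem_range] at hs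
      rw [show 2 * w + (b * w + s) = (b + 2) * w + s by ring, ctildeLo_mul_add (by omega) hs,
        ctildeHi_mul_add (by omega) hs]
      split_ifs <;> omega
    rw [sum_congr rfl hval, sum_sub_distrib, sum_ite_eq', if_pos (mem_range.2 (by omega))]
    simp only [sum_const, card_range, nsmul_eq_mul]
  have hgauss : (∑ b ∈ range p, (b : ℤ)) * 2 = p * (p - 1) := by
    have := congrArg (Nat.cast : ℕ → ℤ) (sum_range_id_mul_two p)
    push_cast [Nat.cast_sub hp] at this
    exact this
  rw [show (p + 2) * w = 2 * w + p * w by ring, sum_range_add,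
    sum_range_two_mul_ctildeLo_add_ctildeHi hw hp, sum_range_mul, sum_congr rfl hblock]
  simp only [sum_sub_distrib, ← mul_sum, sum_const, card_range, nsmul_eq_mul, mul_one]
  linear_combination (-(w : ℤ)) * hgauss

theorem sum_range_ctildeHi_mul_add (hw : 0 < w) (hq : 2 ≤ q) :
    ∑ s ∈ range w, (ctildeHi w p q ((p + 2) * w + s) : ℤ) = (p + 2) * w + 1 := by
  have hval : ∀ s ∈ range w, (ctildeHi w p q ((p + 2) * w + s) : ℤ) =
      (p + 2) + if s = w - 1 then 1 else 0 := by
    intro s hs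
    rw [mem_range] at hs
    rw [ctildeHi_mul_add (by omega) hs]
    split_ifs <;> omega
  rw [sum_congr rfl hval, sum_add_distrib, sum_ite_eq', if_pos (mem_range.2 (by omega))]
  simp only [sum_const, card_range, nsmul_eq_mul]
  ring

theorem sum_sum_layoutDist_Ctilde_sub (hw : 2 ≤ w) (hp : 1 ≤ p) (hpq : p + 2 ≤ q) :
    ∑ x ∈ range ((p + q + 2) * w), ∑ y ∈ range ((p + q + 2) * w),
        ((layoutDist (ctildeLo w (p + 1)) (ctildeHi w (p + 1) (q - 1)) x y : ℤ) -
          layoutDist (ctildeLo w p) (ctildeHi w p q) x y) = 2 * (w * ((q : ℤ) - p - 1)) := by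
  rw [show (p + q + 2) * w = (p + 2) * w + w + (q - 1) * w by
      rw [show p + q + 2 = (p + 2) + 1 + (q - 1) by omega]; ring,
    (isBlockMove_Ctilde hw hp (by omega)).sum_sum_layoutDist_sub]
  push_cast [Nat.cast_sub (show 1 ≤ q by omega)]
  rw [sum_range_ctildeLo_add_ctildeHi hw hp, sum_range_ctildeHi_mul_add (by omega) (by omega)]
  ring

theorem sum_sum_dist_Ctilde (hw : 2 ≤ w) (hq : 1 ≤ q) :
    ∑ x ∈ (Ctilde (w + 1) p q).verts, ∑ y ∈ (Ctilde (w + 1) p q).verts,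
        (Ctilde (w + 1) p q).dist x y =
      ∑ x ∈ range ((p + q + 2) * w), ∑ y ∈ range ((p + q + 2) * w),
        layoutDist (ctildeLo w p) (ctildeHi w p q) x y := by
  have hL := isIntervalLayout_Ctilde (p := p) hw hq
  rw [Ctilde_verts]
  exact sum_congr rfl fun x hx => sum_congr rfl fun y hy => hL.dist_eq
    (by rwa [Ctilde_verts]) (by rwa [Ctilde_verts])

theorem trans_Ctilde_succ_pred (hw : 2 ≤ w) (hp : 1 ≤ p) (hpq : p + 2 ≤ q) :
    (Ctilde (w + 1) (p + 1) (q - 1)).trans = (Ctilde (w + 1) p q).trans + w * (q - p - 1) := by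
  have hsum := sum_sum_layoutDist_Ctilde_sub hw hp hpq
  simp only [sum_sub_distrib] at hsum
  unfold FinHypergraph.trans
  rw [sum_sum_dist_Ctilde hw (by omega), show p + 1 + (q - 1) + 2 = p + q + 2 by omega,
    sum_sum_dist_Ctilde hw (by omega)]
  have hnat : ∑ x ∈ range ((p + q + 2) * w), ∑ y ∈ range ((p + q + 2) * w),
        layoutDist (ctildeLo w (p + 1)) (ctildeHi w (p + 1) (q - 1)) x y =
      ∑ x ∈ range ((p + q + 2) * w), ∑ y ∈ range ((p + q + 2) * w),
        layoutDist (ctildeLo w p) (ctildeHi w p q) x y + 2 * (w * (q - p - 1)) := by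
    zify [show p ≤ q by omega, show 1 ≤ q - p by omega]
    linarith
  rw [hnat, Nat.add_mul_div_left _ _ two_pos]

end CtildeMove

theorem stmt10_general (k p q : ℕ) (hk : 3 ≤ k) (hp : 1 ≤ p) (hpq : p ≤ q - 2) :
    (Ctilde k (p + 1) (q - 1)).trans = (Ctilde k p q).trans + (k - 1) * (q - p - 1) ∧
    0 < (k - 1) * (q - p - 1) := by
  obtain ⟨w, rfl⟩ : ∃ w, k = w + 1 := ⟨k - 1, by omega⟩
  rw [Nat.add_sub_cancel]
  exact ⟨trans_Ctilde_succ_pred (by omega) hp (by omega), Nat.mul_pos (by omega) (by omega)⟩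

/-- Lemma `cycle-max-moving3`: For `k ≥ 3`, `m ≥ 4`, if `1 ≤ p ≤ q - 2`
and `p + q = m - 2`, then `σ(C̃^k_2(p+1,q-1)) - σ(C̃^k_2(p,q)) = (k-1)(q-p-1) > 0`. -/
theorem stmt10 (k m p q : ℕ) (hk : 3 ≤ k) (hm : 4 ≤ m) (hp : 1 ≤ p) (hpq : p ≤ q - 2)
    (hsum : p + q = m - 2) :
    (Ctilde k (p + 1) (q - 1)).trans = (Ctilde k p q).trans + (k - 1) * (q - p - 1) ∧
    0 < (k - 1) * (q - p - 1) :=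
  stmt10_general k p q hk hp hpq
end
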